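/- arXiv:math/9612224 — 11 statements merged into one kernel-verified Lean document; each statement's English description precedes it below -/
import Mathlib

section
/- For every n ≥ 1 the coefficients of the derivative rule satisfy α_n·k_{n+1} = a·n·k_n and β_n·(2a(n−1)+d)·(2an+d) = n·(a(n−1)+d)·(b·d − 2a·e). (Theorem 1, formulas (14) and (18)) -/
/-!
Write `p_n = k_n X^n + s_n X^(n-1) + …`. Comparing the coefficients of `X^(n+1)` and `X^n` on
both sides of the derivative rule gives `α_n k_(n+1) = a n k_n` and
`β_n k_n = a (n-1) s_n + b n k_n - α_n s_(n+1)`, while the coefficient of `X^(n-1)` in the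
differential equation gives `(2a(n-1) + d) s_n = n (b(n-1) + e) k_n`. Eliminating `s_n` and
`s_(n+1)` from the second identity yields the formula for `β_n`.
-/

open Polynomial

section CoeffFormulas

variable {R : Type*} [CommRing R] (a b c d e : R) (q : R[X])

theorem coeff_quadratic_mul_derivative (j : ℕ) :
    ((C a * X ^ 2 + C b * X + C c) * derivative q).coeff (j + 1) =
      a * j * q.coeff j + b * (j + 1) * q.coeff (j + 1) + c * (j + 2) * q.coeff (j + 2) := by
  rcases j with _ | j <;>
  · simp [add_mul, mul_assoc, coeff_derivative, coeff_X_pow_mul', coeff_X_mul]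
    ring

theorem coeff_hypergeometric (l : R) (j : ℕ) :
    ((C a * X ^ 2 + C b * X + C c) * derivative (derivative q) +
        (C d * X + C e) * derivative q + C l * q).coeff j =
      (a * j * (j - 1) + d * j + l) * q.coeff j + (j + 1) * (b * j + e) * q.coeff (j + 1) +
        c * (j + 2) * (j + 1) * q.coeff (j + 2) := by
  rcases j with _ | _ | j <;>
  · simp [add_mul, mul_assoc, coeff_derivative, coeff_X_pow_mul', coeff_X_mul]
    ring

variable {a b c d e q} {α β γ : R} {P Q S : R[X]}

theorem coeff_subleading_of_hypergeometric (m : ℕ) (hq : q.natDegree ≤ m + 1)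
    (hde : (C a * X ^ 2 + C b * X + C c) * derivative (derivative q) +
        (C d * X + C e) * derivative q +
        C (-(a * (m + 1 : ℕ) * (((m + 1 : ℕ) : R) - 1) + d * (m + 1 : ℕ))) * q = 0) :
    q.coeff m * (2 * a * m + d) = (m + 1) * (b * m + e) * q.coeff (m + 1) := by
  have h := congrArg (coeff · m) hde
  simp only [coeff_hypergeometric, coeff_eq_zero_of_natDegree_lt (by omega : q.natDegree < m + 2),
    coeff_zero] at h
  push_cast at h
  linear_combination -h

theorem coeff_top_of_derivative_rule (m : ℕ) (hq : q.natDegree ≤ m + 1)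
    (hQ : Q.natDegree ≤ m + 1) (hS : S.natDegree ≤ m)
    (h : (C a * X ^ 2 + C b * X + C c) * derivative q = C α * P + C β * Q + C γ * S) :
    α * P.coeff (m + 2) = a * (m + 1) * q.coeff (m + 1) := by
  have h := congrArg (coeff · (m + 2)) h
  simp only [coeff_quadratic_mul_derivative, coeff_add, coeff_C_mul,
    coeff_eq_zero_of_natDegree_lt (by omega : q.natDegree < m + 2),
    coeff_eq_zero_of_natDegree_lt (by omega : q.natDegree < m + 3),
    coeff_eq_zero_of_natDegree_lt (by omega : Q.natDegree < m + 2),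
    coeff_eq_zero_of_natDegree_lt (by omega : S.natDegree < m + 2)] at h
  push_cast at h
  linear_combination -h

theorem coeff_subtop_of_derivative_rule (m : ℕ) (hq : q.natDegree ≤ m + 1)
    (hS : S.natDegree ≤ m)
    (h : (C a * X ^ 2 + C b * X + C c) * derivative q = C α * P + C β * Q + C γ * S) :
    a * m * q.coeff m + b * (m + 1) * q.coeff (m + 1) =
      α * P.coeff (m + 1) + β * Q.coeff (m + 1) := by
  have h := congrArg (coeff · (m + 1)) h
  simp only [coeff_quadratic_mul_derivative, coeff_add, coeff_C_mul,
    coeff_eq_zero_of_natDegree_lt (by omega : q.natDegree < m + 2),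
    coeff_eq_zero_of_natDegree_lt (by omega : S.natDegree < m + 1)] at h
  linear_combination h

end CoeffFormulas

theorem derivative_rule_alpha_beta_general
    (a b c d e : ℝ)
    (p : ℕ → Polynomial ℝ) (k : ℕ → ℝ)
    (hdeg : ∀ n : ℕ, (p n).degree = n)
    (hlead : ∀ n : ℕ, (p n).coeff n = k n)
    (hk0 : ∀ n : ℕ, k n ≠ 0)
    (hde : ∀ n : ℕ,
      (Polynomial.C a * X ^ 2 + Polynomial.C b * X + Polynomial.C c) *
          derivative (derivative (p n)) +
        (Polynomial.C d * X + Polynomial.C e) * derivative (p n) +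
        Polynomial.C (-(a * n * ((n : ℝ) - 1) + d * n)) * p n = 0)
    (α β γ : ℕ → ℝ)
    (hrule : ∀ n : ℕ, 1 ≤ n →
      (Polynomial.C a * X ^ 2 + Polynomial.C b * X + Polynomial.C c) * derivative (p n) =
        Polynomial.C (α n) * p (n + 1) + Polynomial.C (β n) * p n +
          Polynomial.C (γ n) * p (n - 1)) :
    ∀ n : ℕ, 1 ≤ n →
      α n * k (n + 1) = a * n * k n ∧
      β n * (2 * a * ((n : ℝ) - 1) + d) * (2 * a * n + d) =
        (n : ℝ) * (a * ((n : ℝ) - 1) + d) * (b * d - 2 * a * e) := by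
  have hdeg_le (n : ℕ) : (p n).natDegree ≤ n := (natDegree_eq_of_degree_eq_some (hdeg n)).le
  intro n hn
  obtain ⟨m, rfl⟩ := Nat.exists_eq_add_of_le' hn
  have hα := coeff_top_of_derivative_rule m (hdeg_le _) (hdeg_le _) (hdeg_le m) (hrule _ hn)
  have hβ := coeff_subtop_of_derivative_rule m (hdeg_le _) (hdeg_le m) (hrule _ hn)
  have hs₁ := coeff_subleading_of_hypergeometric m (hdeg_le _) (hde (m + 1))
  have hs₂ := coeff_subleading_of_hypergeometric (m + 1) (hdeg_le _) (hde (m + 2))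
  simp only [add_assoc, Nat.reduceAdd, hlead] at hα hβ hs₁ hs₂
  refine ⟨by push_cast; linear_combination hα, mul_right_cancel₀ (hk0 (m + 1)) ?_⟩
  push_cast at hs₂ ⊢
  linear_combination -(2 * a * m + d) * (2 * a * (m + 1) + d) * hβ
    + a * m * (2 * a * (m + 1) + d) * hs₁
    - α (m + 1) * (2 * a * m + d) * hs₂
    - (m + 2) * (b * (m + 1) + e) * (2 * a * m + d) * hα

theorem derivative_rule_alpha_beta
    (a b c d e : ℝ)
    (had : ∀ m : ℤ, -3 ≤ m → a * m + d ≠ 0)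
    (p : ℕ → Polynomial ℝ) (k : ℕ → ℝ)
    (hdeg : ∀ n : ℕ, (p n).degree = n)
    (hlead : ∀ n : ℕ, (p n).coeff n = k n)
    (hk0 : ∀ n : ℕ, k n ≠ 0)
    (hde : ∀ n : ℕ,
      (Polynomial.C a * X ^ 2 + Polynomial.C b * X + Polynomial.C c) *
          derivative (derivative (p n)) +
        (Polynomial.C d * X + Polynomial.C e) * derivative (p n) +
        Polynomial.C (-(a * n * ((n : ℝ) - 1) + d * n)) * p n = 0)
    (α β γ : ℕ → ℝ)
    (hrule : ∀ n : ℕ, 1 ≤ n →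
      (Polynomial.C a * X ^ 2 + Polynomial.C b * X + Polynomial.C c) * derivative (p n) =
        Polynomial.C (α n) * p (n + 1) + Polynomial.C (β n) * p n +
          Polynomial.C (γ n) * p (n - 1)) :
    ∀ n : ℕ, 1 ≤ n →
      α n * k (n + 1) = a * n * k n ∧
      β n * (2 * a * ((n : ℝ) - 1) + d) * (2 * a * n + d) =
        (n : ℝ) * (a * ((n : ℝ) - 1) + d) * (b * d - 2 * a * e) :=
  derivative_rule_alpha_beta_general a b c d e p k hdeg hlead hk0 hde α β γ hrule
end

section
/- For every n ≥ 1 the recurrence coefficients satisfy A_n·k_n = k_{n+1} and B_n·k_n·(2a(n−1)+d)·(2an+d) = k_{n+1}·(2bn(a(n−1)+d) + e(d−2a)). (Theorem 1, formulas (9) and (20)) -/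
open Polynomial

private lemma de_step (a b c d e lam : ℝ) (q : Polynomial ℝ)
    (h : (C a * X^2 + C b * X + C c) * derivative (derivative q) +
      (C d * X + C e) * derivative q + C lam * q = 0) (j : ℕ) (h2 : q.coeff (j+2) = 0) :
    (a * j * ((j:ℝ)-1) + d * j + lam) * q.coeff j +
      ((j:ℝ)+1) * (b*j+e) * q.coeff (j+1) = 0 := by
  match j, h2 with
  | 0, h2 =>
    have h' := congrArg (fun r : Polynomial ℝ => r.coeff 0) h
    simp only [add_mul, coeff_add, mul_assoc, coeff_C_mul, mul_coeff_zero, coeff_X_pow,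
      coeff_X_zero, coeff_derivative, coeff_zero, coeff_X_mul] at h'
    push_cast
    simp at h' ⊢
    linear_combination h' - 2 * c * h2
  | 1, h2 =>
    have h' := congrArg (fun r : Polynomial ℝ => r.coeff 1) h
    have hx : ((X:ℝ[X])^2 * derivative (derivative q)).coeff 1 = 0 := by
      rw [mul_comm, coeff_mul_X_pow']; simp
    simp only [add_mul, coeff_add, mul_assoc, coeff_C_mul, coeff_X_mul, hx,
      coeff_derivative, coeff_zero] at h'
    norm_num at h' ⊢
    linear_combination h' - 6 * c * h2
  | (m+2), h2 =>
    have h' := congrArg (fun r : Polynomial ℝ => r.coeff (m+2)) h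
    simp only [add_mul, coeff_add, mul_assoc, coeff_C_mul, coeff_X_pow_mul, coeff_X_mul,
      coeff_derivative, coeff_zero] at h'
    norm_num at h' ⊢
    push_cast at h' ⊢
    linear_combination h' - c * ((m:ℝ)+3)*((m:ℝ)+4) * h2

theorem recurrence_A_B
    (a b c d e : ℝ)
    (had : ∀ m : ℤ, -3 ≤ m → a * m + d ≠ 0)
    (p : ℕ → Polynomial ℝ) (k : ℕ → ℝ)
    (hdeg : ∀ n : ℕ, (p n).degree = n)
    (hlead : ∀ n : ℕ, (p n).coeff n = k n)
    (hk0 : ∀ n : ℕ, k n ≠ 0)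
    (hde : ∀ n : ℕ,
      (Polynomial.C a * X ^ 2 + Polynomial.C b * X + Polynomial.C c) *
          derivative (derivative (p n)) +
        (Polynomial.C d * X + Polynomial.C e) * derivative (p n) +
        Polynomial.C (-(a * n * ((n : ℝ) - 1) + d * n)) * p n = 0)
    (A B C : ℕ → ℝ)
    (hrec : ∀ n : ℕ, 1 ≤ n →
      p (n + 1) = (Polynomial.C (A n) * X + Polynomial.C (B n)) * p n -
        Polynomial.C (C n) * p (n - 1)) :
    ∀ n : ℕ, 1 ≤ n →
      A n * k n = k (n + 1) ∧
      B n * k n * (2 * a * ((n : ℝ) - 1) + d) * (2 * a * n + d) =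
        k (n + 1) * (2 * b * n * (a * ((n : ℝ) - 1) + d) + e * (d - 2 * a)) := by
  have hc : ∀ i j : ℕ, i < j → (p i).coeff j = 0 := by
    intro i j hij
    apply coeff_eq_zero_of_degree_lt
    rw [hdeg]
    exact_mod_cast hij
  intro n hn
  obtain ⟨m, rfl⟩ : ∃ m, n = m + 1 := ⟨n - 1, by omega⟩
  -- subleading coefficient relations from the differential equation
  have hq := de_step a b c d e _ (p (m+1)) (hde (m+1)) m (hc _ _ (by omega))
  have hr := de_step a b c d e _ (p (m+2)) (hde (m+2)) (m+1) (hc _ _ (by omega))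
  rw [hlead (m+1)] at hq
  rw [show m+1+1 = m+2 from rfl, hlead (m+2)] at hr
  push_cast at hq hr
  have hq' : (2*a*m + d) * (p (m+1)).coeff m = ((m:ℝ)+1)*(b*m+e)*k (m+1) := by
    linear_combination -hq
  have hr' : (2*a*((m:ℝ)+1) + d) * (p (m+2)).coeff (m+1) =
      ((m:ℝ)+2)*(b*((m:ℝ)+1)+e)*k (m+2) := by
    linear_combination -hr
  -- coefficient extraction from the recurrence
  have hrec' := hrec (m+1) (by omega)
  simp only [Nat.add_sub_cancel] at hrec'
  have hA : A (m+1) * k (m+1) = k (m+2) := by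
    have h' := congrArg (fun r : Polynomial ℝ => r.coeff (m+2)) hrec'
    simp only [add_mul, coeff_sub, coeff_add, mul_assoc, coeff_C_mul, coeff_X_mul] at h'
    rw [show m+1+1 = m+2 from rfl] at h'
    rw [hlead (m+2), hlead (m+1), hc (m+1) (m+2) (by omega), hc m (m+2) (by omega)] at h'
    linear_combination -h'
  have hB : (p (m+2)).coeff (m+1) =
      A (m+1) * (p (m+1)).coeff m + B (m+1) * k (m+1) := by
    have h' := congrArg (fun r : Polynomial ℝ => r.coeff (m+1)) hrec'
    simp only [add_mul, coeff_sub, coeff_add, mul_assoc, coeff_C_mul, coeff_X_mul] at h'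
    rw [hlead (m+1), hc m (m+1) (by omega)] at h'
    linear_combination h'
  refine ⟨by push_cast; linear_combination hA, ?_⟩
  push_cast
  linear_combination
    (-(2*a*m+d)*(2*a*((m:ℝ)+1)+d)) * hB + (2*a*m+d) * hr'
    - (2*a*((m:ℝ)+1)+d) * (A (m+1)) * hq'
    - (2*a*((m:ℝ)+1)+d) * (((m:ℝ)+1)*(b*m+e)) * hA
end

section
/- The subleading coefficient of p satisfies (2a(n−1)+d)·k'_n = n·(b(n−1)+e)·k_n, where k_n is the leading coefficient of p and k'_n is the coefficient of X^{n−1} in p. (Formula (29)) -/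
open Polynomial

lemma aux_X_mul_deriv (q : Polynomial ℝ) (m : ℕ) :
    (X * derivative q).coeff m = (m : ℝ) * q.coeff m := by
  cases m with
  | zero => simp [mul_coeff_zero]
  | succ k => simp [coeff_X_mul, coeff_derivative]; ring

lemma aux_X_sq_mul_deriv2 (q : Polynomial ℝ) (m : ℕ) :
    (X ^ 2 * derivative (derivative q)).coeff m
      = (m : ℝ) * ((m : ℝ) - 1) * q.coeff m := by
  match m with
  | 0 => simp [mul_coeff_zero]
  | 1 =>
    have : (X ^ 2 : Polynomial ℝ) * derivative (derivative q)
        = X * (X * derivative (derivative q)) := by ring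
    rw [this]
    simp [coeff_X_mul, mul_coeff_zero]
  | (k+2) =>
    have h := coeff_X_pow_mul (derivative (derivative q)) 2 k
    rw [h, coeff_derivative, coeff_derivative]
    push_cast
    ring

theorem subleading_coefficient
    (a b c d e : ℝ) (n : ℕ) (hn : 1 ≤ n)
    (p : Polynomial ℝ)
    (hdeg : p.degree = n)
    (hde :
      (Polynomial.C a * X ^ 2 + Polynomial.C b * X + Polynomial.C c) *
          derivative (derivative p) +
        (Polynomial.C d * X + Polynomial.C e) * derivative p -
        Polynomial.C (a * n * ((n : ℝ) - 1) + d * n) * p = 0)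
    (hden : 2 * a * ((n : ℝ) - 1) + d ≠ 0) :
    (2 * a * ((n : ℝ) - 1) + d) * p.coeff (n - 1) =
      (n : ℝ) * (b * ((n : ℝ) - 1) + e) * p.coeff n := by
  obtain ⟨m, rfl⟩ : ∃ m, n = m + 1 := ⟨n - 1, (Nat.succ_pred_eq_of_pos hn).symm⟩
  have key := congrArg (fun q => Polynomial.coeff q m) hde
  simp only [coeff_zero] at key
  have hrw : (Polynomial.C a * X ^ 2 + Polynomial.C b * X + Polynomial.C c) *
          derivative (derivative p) +
        (Polynomial.C d * X + Polynomial.C e) * derivative p -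
        Polynomial.C (a * (m+1:ℕ) * (((m+1:ℕ) : ℝ) - 1) + d * (m+1:ℕ)) * p
      = Polynomial.C a * (X ^ 2 * derivative (derivative p))
        + Polynomial.C b * (X * derivative (derivative p))
        + Polynomial.C c * derivative (derivative p)
        + Polynomial.C d * (X * derivative p)
        + Polynomial.C e * derivative p
        - Polynomial.C (a * (m+1:ℕ) * (((m+1:ℕ) : ℝ) - 1) + d * (m+1:ℕ)) * p := by
    ring
  rw [hrw] at key
  simp only [coeff_sub, coeff_add, coeff_C_mul, aux_X_mul_deriv, aux_X_sq_mul_deriv2,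
    coeff_derivative] at key
  have h2 : p.coeff (m + 2) = 0 := by
    apply coeff_eq_zero_of_degree_lt
    rw [hdeg]
    exact_mod_cast Nat.lt_succ_self (m+1)
  rw [show m+1+1 = m+2 from rfl, h2] at key
  have hm : (m + 1 : ℕ) - 1 = m := rfl
  rw [hm]
  push_cast at key ⊢
  linear_combination -key
end

section
/- The second subleading coefficient of p satisfies 2·(2a(n−1)+d)·(2an−3a+d)·k''_n = n·(n−1)·(n²b² − 3nb² + 2nbe + 2cna − 2ca − 3be + 2b² + e² + cd)·k_n, where k_n is the leading coefficient of p and k''_n is the coefficient of X^{n−2} in p. (Formula (33)) -/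
open Polynomial

theorem second_subleading_coefficient
    (a b c d e : ℝ) (n : ℕ) (hn : 2 ≤ n)
    (p : Polynomial ℝ)
    (hdeg : p.degree = n)
    (hde :
      (Polynomial.C a * X ^ 2 + Polynomial.C b * X + Polynomial.C c) *
          derivative (derivative p) +
        (Polynomial.C d * X + Polynomial.C e) * derivative p -
        Polynomial.C (a * n * ((n : ℝ) - 1) + d * n) * p = 0)
    (hden1 : 2 * a * ((n : ℝ) - 1) + d ≠ 0)
    (hden2 : 2 * a * n - 3 * a + d ≠ 0) :
    2 * (2 * a * ((n : ℝ) - 1) + d) * (2 * a * n - 3 * a + d) * p.coeff (n - 2) =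
      (n : ℝ) * ((n : ℝ) - 1) *
        ((n : ℝ) ^ 2 * b ^ 2 - 3 * n * b ^ 2 + 2 * n * b * e + 2 * c * n * a -
          2 * c * a - 3 * b * e + 2 * b ^ 2 + e ^ 2 + c * d) * p.coeff n := by
  obtain ⟨m, rfl⟩ : ∃ m, n = m + 2 := ⟨n - 2, by omega⟩
  have hX2 : ∀ (q : ℝ[X]) (r : ℝ) (k : ℕ),
      ((C r * X ^ 2) * q).coeff k = if 2 ≤ k then r * q.coeff (k - 2) else 0 := by
    intro q r k
    rw [mul_comm (C r * X ^ 2) q, ← mul_assoc, coeff_mul_X_pow']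
    simp [coeff_mul_C, mul_comm]
  have hX1 : ∀ (q : ℝ[X]) (r : ℝ) (k : ℕ),
      ((C r * X) * q).coeff k = if 1 ≤ k then r * q.coeff (k - 1) else 0 := by
    intro q r k
    rw [← pow_one X, mul_comm (C r * X ^ 1) q, ← mul_assoc, coeff_mul_X_pow']
    simp [coeff_mul_C, mul_comm]
  have hnd : p.natDegree = m + 2 := natDegree_eq_of_degree_eq_some hdeg
  have h3 : p.coeff (m + 3) = 0 := coeff_eq_zero_of_natDegree_lt (by omega)
  have hde' : (C a * X ^ 2) * derivative (derivative p) + (C b * X) * derivative (derivative p)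
      + C c * derivative (derivative p) + (C d * X) * derivative p + C e * derivative p
      - C (a * ((m + 2 : ℕ) : ℝ) * (((m + 2 : ℕ) : ℝ) - 1) + d * ((m + 2 : ℕ) : ℝ)) * p = 0 := by
    rw [← hde]; ring
  have e1 := congrArg (fun q => q.coeff (m + 1)) hde'
  have e2 := congrArg (fun q => q.coeff m) hde'
  simp only [coeff_add, coeff_sub, coeff_zero, coeff_C_mul, hX2, hX1, coeff_derivative] at e1 e2
  have hidx : m + 2 - 2 = m := by omega
  rw [hidx]
  rcases m with _ | _ | m
  · norm_num at h3 e1 e2 ⊢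
    rw [h3] at e1
    norm_num at e1
    linear_combination (-e) * e1 + (-(2 * a + d)) * e2
  · norm_num at h3 e1 e2 ⊢
    rw [h3] at e1
    norm_num at e1
    linear_combination (-(2 * (b + e))) * e1 + (-(2 * a * 2 + d)) * e2
  · rw [if_pos (show 2 ≤ m + 1 + 1 + 1 by omega)] at e1
    simp only [show m + 1 + 1 + 1 - 2 = m + 1 from rfl, show m + 1 + 1 - 2 = m from rfl,
      show m + 1 + 1 + 1 - 1 = m + 1 + 1 from rfl, show m + 1 + 1 - 1 = m + 1 from rfl,
      show m + 1 + 1 + 1 + 1 + 1 = m + 1 + 1 + 3 from rfl, h3] at e1 e2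
    push_cast at e1 e2 ⊢
    linear_combination (-(((m : ℝ) + 3) * (b * ((m : ℝ) + 2) + e))) * e1 +
      (-(2 * a * ((m : ℝ) + 3) + d)) * e2
end

section
/- For every n ≥ 1 the subleading coefficients satisfy k'_{n+1}·n·(b(n−1)+e)·(2an+d)·k_n = (n+1)·(bn+e)·(2a(n−1)+d)·k_{n+1}·k'_n, where k'_n denotes the coefficient of X^{n−1} in p_n. (Corollary 4) -/
open Polynomial

lemma coeff_CX2mul (r : ℝ) (q : Polynomial ℝ) (n : ℕ) :
    (C r * X ^ 2 * q).coeff n = r * (if 2 ≤ n then q.coeff (n - 2) else 0) := by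
  rw [mul_assoc, coeff_C_mul, X_pow_mul, coeff_mul_X_pow']

lemma coeff_CXmul (r : ℝ) (q : Polynomial ℝ) (n : ℕ) :
    (C r * X * q).coeff n = r * (if 1 ≤ n then q.coeff (n - 1) else 0) := by
  have h1 : (C r * X * q) = C r * (X ^ 1 * q) := by rw [pow_one, mul_assoc]
  rw [h1, coeff_C_mul, X_pow_mul, coeff_mul_X_pow']

lemma key (a b c d e : ℝ)
    (p : ℕ → Polynomial ℝ) (k : ℕ → ℝ)
    (hdeg : ∀ n : ℕ, (p n).degree = n)
    (hlead : ∀ n : ℕ, (p n).coeff n = k n)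
    (hde : ∀ n : ℕ,
      (Polynomial.C a * X ^ 2 + Polynomial.C b * X + Polynomial.C c) *
          derivative (derivative (p n)) +
        (Polynomial.C d * X + Polynomial.C e) * derivative (p n) +
        Polynomial.C (-(a * n * ((n : ℝ) - 1) + d * n)) * p n = 0) :
    ∀ m : ℕ,
      (2 * a * (m : ℝ) + d) * (p (m + 1)).coeff m =
        ((m : ℝ) + 1) * (b * m + e) * k (m + 1) := by
  have hz : ∀ i j : ℕ, i < j → (p i).coeff j = 0 := fun i j hij =>
    coeff_eq_zero_of_degree_lt (by rw [hdeg]; exact_mod_cast hij)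
  intro m
  have h := congrArg (fun q => Polynomial.coeff q m) (hde (m + 1))
  simp only [add_mul, coeff_add, coeff_CX2mul, coeff_CXmul, coeff_C_mul, coeff_derivative,
    coeff_zero] at h
  match m with
  | 0 =>
    norm_num at h
    rw [hz 1 2 (by omega), hlead 1] at h
    norm_num at h ⊢
    first
    | linear_combination h
    | linear_combination -h
  | 1 =>
    norm_num at h
    rw [hz 2 3 (by omega), hlead 2] at h
    push_cast at h ⊢
    first
    | linear_combination h
    | linear_combination -h
  | (m + 2) =>
    simp only [show 2 ≤ m + 2 by omega, show 1 ≤ m + 2 by omega, if_true,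
      Nat.add_sub_cancel] at h
    simp only [show m + 2 - 1 = m + 1 by omega, show m + 1 + 1 = m + 2 by omega] at h
    rw [hz (m + 2 + 1) (m + 2 + 1 + 1) (by omega), hlead (m + 2 + 1)] at h
    push_cast at h ⊢
    first
    | linear_combination h
    | linear_combination -h

theorem subleading_coefficient_ratio
    (a b c d e : ℝ)
    (had : ∀ m : ℤ, -3 ≤ m → a * m + d ≠ 0)
    (p : ℕ → Polynomial ℝ) (k : ℕ → ℝ)
    (hdeg : ∀ n : ℕ, (p n).degree = n)
    (hlead : ∀ n : ℕ, (p n).coeff n = k n)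
    (hk0 : ∀ n : ℕ, k n ≠ 0)
    (hde : ∀ n : ℕ,
      (Polynomial.C a * X ^ 2 + Polynomial.C b * X + Polynomial.C c) *
          derivative (derivative (p n)) +
        (Polynomial.C d * X + Polynomial.C e) * derivative (p n) +
        Polynomial.C (-(a * n * ((n : ℝ) - 1) + d * n)) * p n = 0) :
    ∀ n : ℕ, 1 ≤ n →
      (p (n + 1)).coeff n * (n : ℝ) * (b * ((n : ℝ) - 1) + e) * (2 * a * n + d) * k n =
        ((n : ℝ) + 1) * (b * n + e) * (2 * a * ((n : ℝ) - 1) + d) * k (n + 1) *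
          (p n).coeff (n - 1) := by
  intro n hn
  obtain ⟨m, rfl⟩ : ∃ m, n = m + 1 := ⟨n - 1, by omega⟩
  have hA := key a b c d e p k hdeg hlead hde (m + 1)
  have hB := key a b c d e p k hdeg hlead hde m
  rw [Nat.add_sub_cancel]
  push_cast at hA hB ⊢
  linear_combination (((m : ℝ) + 1) * (b * m + e) * k (m + 1)) * hA -
    (((m : ℝ) + 2) * (b * ((m : ℝ) + 1) + e) * k (m + 2)) * hB
end

section
/- The Rodrigues constants satisfy, for every n ∈ ℕ, E_{n+1}·(a(2n−1)+d)·(2an+d)·k_n = (a(n−1)+d)·k_{n+1}·E_n. (Corollary 5) -/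
open Polynomial

noncomputable def Qaux (a b c d e : ℝ) (n : ℕ) : ℕ → Polynomial ℝ
  | 0 => 1
  | m + 1 =>
      (Polynomial.C (d + 2 * a * ((n : ℝ) - m - 1)) * X
          + Polynomial.C (e + b * ((n : ℝ) - m - 1))) * Qaux a b c d e n m +
        (Polynomial.C a * X ^ 2 + Polynomial.C b * X + Polynomial.C c) *
          derivative (Qaux a b c d e n m)

lemma Qaux_natDegree_le (a b c d e : ℝ) (n : ℕ) :
    ∀ m : ℕ, (Qaux a b c d e n m).natDegree ≤ m := by
  intro m
  induction m with
  | zero => simp [Qaux]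
  | succ m ih =>
    rw [Qaux]
    refine (natDegree_add_le _ _).trans (max_le ?_ ?_)
    · exact (natDegree_mul_le).trans (by
        have := natDegree_linear_le (a := d + 2 * a * ((n : ℝ) - m - 1))
          (b := e + b * ((n : ℝ) - m - 1))
        omega)
    · rcases Nat.eq_zero_or_pos m with hm | hm
      · subst hm
        have h0 : derivative (Qaux a b c d e n 0) = 0 := by simp [Qaux]
        rw [h0, mul_zero]
        simp
      · refine (natDegree_mul_le).trans ?_
        have h1 : (Polynomial.C a * X ^ 2 + Polynomial.C b * X + Polynomial.C c :
            Polynomial ℝ).natDegree ≤ 2 := natDegree_quadratic_le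
        have h2 := (natDegree_derivative_le (Qaux a b c d e n m))
        omega

lemma Qaux_coeff (a b c d e : ℝ) (n : ℕ) :
    ∀ m : ℕ, (Qaux a b c d e n m).coeff m
      = ∏ i ∈ Finset.range m, (a * (2 * (n : ℝ) - i - 2) + d) := by
  intro m
  induction m with
  | zero => simp [Qaux]
  | succ m ih =>
    rw [Qaux, Finset.prod_range_succ, ← ih, coeff_add]
    have h1 : ((Polynomial.C (d + 2 * a * ((n : ℝ) - m - 1)) * X
          + Polynomial.C (e + b * ((n : ℝ) - m - 1))) * Qaux a b c d e n m).coeff (m + 1)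
        = (d + 2 * a * ((n : ℝ) - m - 1)) * (Qaux a b c d e n m).coeff m := by
      rw [add_comm m 1, coeff_mul_add_eq_of_natDegree_le natDegree_linear_le
        (Qaux_natDegree_le a b c d e n m), coeff_add, coeff_C_mul, coeff_X_one, coeff_C]
      norm_num
    have h2 : ((Polynomial.C a * X ^ 2 + Polynomial.C b * X + Polynomial.C c) *
          derivative (Qaux a b c d e n m)).coeff (m + 1)
        = a * (m * (Qaux a b c d e n m).coeff m) := by
      rcases Nat.eq_zero_or_pos m with hm | hm
      · subst hm; simp [Qaux]
      · obtain ⟨m', rfl⟩ : ∃ m', m = m' + 1 := ⟨m - 1, by omega⟩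
        have hd : (derivative (Qaux a b c d e n (m' + 1))).natDegree ≤ m' := by
          have := natDegree_derivative_le (Qaux a b c d e n (m' + 1))
          have := Qaux_natDegree_le a b c d e n (m' + 1)
          omega
        have : (m' + 1) + 1 = 2 + m' := by omega
        rw [this, coeff_mul_add_eq_of_natDegree_le natDegree_quadratic_le hd]
        have hq2 : (Polynomial.C a * X ^ 2 + Polynomial.C b * X + Polynomial.C c :
            Polynomial ℝ).coeff 2 = a := by
          simp [coeff_C, coeff_C_mul, coeff_X_pow, coeff_X_one]
        rw [hq2, coeff_derivative]
        push_cast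
        ring
    rw [h1, h2]
    push_cast
    ring

lemma claimA (a b c d e : ℝ) (U : Set ℝ) (hUopen : IsOpen U) (ρ : ℝ → ℝ)
    (hρdiff : ∀ x ∈ U, HasDerivAt ρ (deriv ρ x) x)
    (hP : ∀ x ∈ U, (a * x ^ 2 + b * x + c) * deriv ρ x
      = ((d * x + e) - (2 * a * x + b)) * ρ x) (n : ℕ) :
    ∀ m : ℕ, m ≤ n → ∀ x ∈ U,
      iteratedDerivWithin m (fun y : ℝ => ρ y * ((a * y ^ 2 + b * y + c) ^ n)) U x
        = ρ x * (a * x ^ 2 + b * x + c) ^ (n - m) * (Qaux a b c d e n m).eval x := by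
  intro m
  induction m with
  | zero =>
    intro _ x hx
    simp [Qaux]
  | succ m ih =>
    intro hm1 x hx
    have hm : m ≤ n := Nat.le_of_succ_le hm1
    obtain ⟨j, hj⟩ : ∃ j, n - m = j + 1 := ⟨n - (m + 1), by omega⟩
    have hjm : n - (m + 1) = j := by omega
    have hjr : (j : ℝ) = (n : ℝ) - m - 1 := by
      have : n = j + 1 + m := by omega
      subst this
      push_cast
      ring
    set g : ℝ → ℝ := fun y => ρ y * (a * y ^ 2 + b * y + c) ^ (j + 1)
      * (Qaux a b c d e n m).eval y with hg
    rw [iteratedDerivWithin_succ,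
      derivWithin_of_isOpen hUopen hx]
    have hev : iteratedDerivWithin m (fun y : ℝ => ρ y * ((a * y ^ 2 + b * y + c) ^ n)) U
        =ᶠ[nhds x] g := by
      refine Filter.eventuallyEq_of_mem (hUopen.mem_nhds hx) (fun y hy => ?_)
      rw [ih hm y hy, hg, hj]
    rw [hev.deriv_eq]
    -- compute deriv g x
    have hS : HasDerivAt (fun y : ℝ => a * y ^ 2 + b * y + c) (2 * a * x + b) x := by
      have h : HasDerivAt (fun y : ℝ => a * y ^ 2 + b * y + c)
          (a * (↑2 * x ^ (2 - 1)) + b * 1 + 0) x :=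
        (((hasDerivAt_pow 2 x).const_mul a).add ((hasDerivAt_id' x).const_mul b)).add
          (hasDerivAt_const x c)
      convert h using 1
      norm_num
      ring
    have hSp : HasDerivAt (fun y : ℝ => (a * y ^ 2 + b * y + c) ^ (j + 1))
        ((((j : ℝ) + 1)) * (a * x ^ 2 + b * x + c) ^ j * (2 * a * x + b)) x := by
      have := hS.fun_pow (j + 1)
      simpa using this
    have hq := Polynomial.hasDerivAt (Qaux a b c d e n m) x
    have hgd := ((hρdiff x hx).fun_mul hSp).fun_mul hq
    rw [hgd.deriv]
    rw [hjm]
    have hPx := hP x hx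
    rw [show Qaux a b c d e n (m + 1)
        = (Polynomial.C (d + 2 * a * ((n : ℝ) - m - 1)) * X
            + Polynomial.C (e + b * ((n : ℝ) - m - 1))) * Qaux a b c d e n m +
          (Polynomial.C a * X ^ 2 + Polynomial.C b * X + Polynomial.C c) *
            derivative (Qaux a b c d e n m) from rfl]
    simp only [eval_add, eval_mul, eval_pow, eval_C, eval_X]
    rw [← hjr]
    linear_combination ((a * x ^ 2 + b * x + c) ^ j
      * (Qaux a b c d e n m).eval x) * hPx

theorem rodrigues_constant_ratio
    (a b c d e : ℝ)
    (had : ∀ m : ℤ, -3 ≤ m → a * m + d ≠ 0)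
    (p : ℕ → Polynomial ℝ) (k : ℕ → ℝ)
    (hdeg : ∀ n : ℕ, (p n).degree = n)
    (hlead : ∀ n : ℕ, (p n).coeff n = k n)
    (hk0 : ∀ n : ℕ, k n ≠ 0)
    (hde : ∀ n : ℕ,
      (Polynomial.C a * X ^ 2 + Polynomial.C b * X + Polynomial.C c) *
          derivative (derivative (p n)) +
        (Polynomial.C d * X + Polynomial.C e) * derivative (p n) +
        Polynomial.C (-(a * n * ((n : ℝ) - 1) + d * n)) * p n = 0)
    (U : Set ℝ) (hUne : U.Nonempty) (hUopen : IsOpen U)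
    (ρ : ℝ → ℝ)
    (hρsmooth : ContDiffOn ℝ (⊤ : ℕ∞) ρ U)
    (hρ0 : ∀ x ∈ U, ρ x ≠ 0)
    (hPearson : ∀ x ∈ U,
      HasDerivAt (fun y : ℝ =>
          (Polynomial.C a * X ^ 2 + Polynomial.C b * X + Polynomial.C c).eval y * ρ y)
        ((d * x + e) * ρ x) x)
    (E : ℕ → ℝ) (hE0 : ∀ n : ℕ, E n ≠ 0)
    (hRodrigues : ∀ n : ℕ, ∀ x ∈ U,
      ρ x * (p n).eval x =
        E n * iteratedDerivWithin n
          (fun y : ℝ => ρ y * ((a * y ^ 2 + b * y + c) ^ n)) U x) :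
    ∀ n : ℕ,
      E (n + 1) * (a * (2 * (n : ℝ) - 1) + d) * (2 * a * n + d) * k n =
        (a * ((n : ℝ) - 1) + d) * k (n + 1) * E n := by
  -- differentiability of ρ on U
  have hρdiff : ∀ x ∈ U, HasDerivAt ρ (deriv ρ x) x := by
    intro x hx
    exact (((hρsmooth.differentiableOn (by simp)) x hx).differentiableAt
      (hUopen.mem_nhds hx)).hasDerivAt
  -- Pearson in scalar form
  have hP : ∀ x ∈ U, (a * x ^ 2 + b * x + c) * deriv ρ x
      = ((d * x + e) - (2 * a * x + b)) * ρ x := by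
    intro x hx
    have h1 := hPearson x hx
    simp only [eval_add, eval_mul, eval_pow, eval_C, eval_X] at h1
    have hS : HasDerivAt (fun y : ℝ => a * y ^ 2 + b * y + c) (2 * a * x + b) x := by
      have h : HasDerivAt (fun y : ℝ => a * y ^ 2 + b * y + c)
          (a * (↑2 * x ^ (2 - 1)) + b * 1 + 0) x :=
        (((hasDerivAt_pow 2 x).const_mul a).add ((hasDerivAt_id' x).const_mul b)).add
          (hasDerivAt_const x c)
      convert h using 1
      norm_num
      ring
    have h2 := hS.mul (hρdiff x hx)
    have h3 := h1.unique h2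
    linear_combination -h3
  -- U is infinite
  have hUinf : U.Infinite := by
    obtain ⟨x₀, hx₀⟩ := hUne
    obtain ⟨ε, hε, hball⟩ := Metric.isOpen_iff.mp hUopen x₀ hx₀
    refine (Set.Ioo_infinite (by linarith : x₀ - ε < x₀ + ε)).mono ?_
    rw [← Real.ball_eq_Ioo]
    exact hball
  -- pointwise identity p N = E N • Q N N on U, hence as polynomials
  have hpQ : ∀ N : ℕ, p N = Polynomial.C (E N) * Qaux a b c d e N N := by
    intro N
    have hroot : ∀ x ∈ U,
        (p N - Polynomial.C (E N) * Qaux a b c d e N N).eval x = 0 := by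
      intro x hx
      have h1 := hRodrigues N x hx
      have h2 := claimA a b c d e U hUopen ρ hρdiff hP N N le_rfl x hx
      rw [h2] at h1
      simp only [Nat.sub_self, pow_zero, mul_one] at h1
      have h3 : ρ x * (p N).eval x = ρ x * (E N * (Qaux a b c d e N N).eval x) := by
        rw [h1]; ring
      have h4 := mul_left_cancel₀ (hρ0 x hx) h3
      simp [h4]
    have h0 : p N - Polynomial.C (E N) * Qaux a b c d e N N = 0 := by
      apply Polynomial.eq_zero_of_infinite_isRoot
      exact hUinf.mono (fun x hx => hroot x hx)
    linear_combination (norm := ring_nf) h0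
  -- leading coefficients
  have hk : ∀ N : ℕ, k N = E N * ∏ i ∈ Finset.range N, (a * (2 * (N : ℝ) - i - 2) + d) := by
    intro N
    rw [← hlead N, hpQ N, coeff_C_mul, Qaux_coeff]
  intro n
  set f : ℕ → ℝ := fun i => a * (2 * (n : ℝ) - i) + d with hf
  have e1 : (∏ i ∈ Finset.range (n + 1), (a * (2 * ((n : ℕ) + 1 : ℝ) - i - 2) + d))
      = ∏ i ∈ Finset.range (n + 1), f i := by
    refine Finset.prod_congr rfl (fun i _ => ?_)
    simp only [hf]
    push_cast
    ring
  have hprod : (∏ i ∈ Finset.range n, (a * (2 * (n : ℝ) - i - 2) + d))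
        * (a * (2 * (n : ℝ) - 1) + d) * (2 * a * n + d)
      = (a * ((n : ℝ) - 1) + d) * ∏ i ∈ Finset.range (n + 1), f i := by
    have e2 := Finset.prod_range_succ f (n + 1)
    have e3 := Finset.prod_range_succ' f (n + 1)
    have e4 := Finset.prod_range_succ' (fun i => f (i + 1)) n
    have e5 : (∏ i ∈ Finset.range n, f (i + 1 + 1))
        = ∏ i ∈ Finset.range n, (a * (2 * (n : ℝ) - i - 2) + d) := by
      refine Finset.prod_congr rfl (fun i _ => ?_)
      simp only [hf]
      push_cast
      ring
    have hfn1 : f (n + 1) = a * ((n : ℝ) - 1) + d := by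
      simp only [hf]; push_cast; ring
    have hf0 : f 0 = 2 * a * n + d := by
      simp only [hf]; push_cast; ring
    have hf1 : f 1 = a * (2 * (n : ℝ) - 1) + d := by
      simp only [hf]; push_cast; ring
    calc (∏ i ∈ Finset.range n, (a * (2 * (n : ℝ) - i - 2) + d))
          * (a * (2 * (n : ℝ) - 1) + d) * (2 * a * n + d)
        = ((∏ i ∈ Finset.range n, f (i + 1 + 1)) * f 1) * f 0 := by
          rw [e5, hf0, hf1]
      _ = (∏ i ∈ Finset.range (n + 1), f (i + 1)) * f 0 := by rw [← e4]
      _ = ∏ i ∈ Finset.range (n + 2), f i := by rw [← e3]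
      _ = (∏ i ∈ Finset.range (n + 1), f i) * f (n + 1) := e2
      _ = (a * ((n : ℝ) - 1) + d) * ∏ i ∈ Finset.range (n + 1), f i := by
          rw [hfn1]; ring
  rw [hk n, hk (n + 1)]
  push_cast at e1 ⊢
  rw [e1]
  linear_combination E n * E (n + 1) * hprod
end

section
/- For every n ≥ 1 the recurrence coefficients satisfy: A_n·k_n = k_{n+1}; B_n·k_n·(2an+d)·(2a(n−1)+d) = k_{n+1}·((n−1)(d+2b)(a(n−1)+a+d) − 2ae + d² + de + 2bd); and C_n·k_{n−1}·(a(2n−3)+d)·(a(2n−1)+d)·(2a(n−1)+d)² = −k_{n+1}·n·(a(n−2)+d)·((n−1)(a(n−1)+d)(a²(n−1)² + a(n−1)d + 4ac + 2ae − bd − b²) + ae² − bde + cd²). (Theorem 2, recurrence part) -/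
open Polynomial

/-- Forward difference operator on real polynomials: `Δp = p(X+1) - p`. -/
noncomputable def polyFwdDiff (p : Polynomial ℝ) : Polynomial ℝ := p.comp (X + 1) - p

/-- Backward difference operator on real polynomials: `∇p = p - p(X-1)`. -/
noncomputable def polyBwdDiff (p : Polynomial ℝ) : Polynomial ℝ := p - p.comp (X - 1)

/-!
Write `p_n = k_n X^n + s_n X^(n-1) + t_n X^(n-2) + ⋯`. Expanding `q(X ± 1)` by Taylor's formula,
the coefficients of `X^(n-1)` and `X^(n-2)` in the difference equation determine `s_n` and `t_n`
from `k_n`. Comparing the coefficients of `X^(n+1)`, `X^n` and `X^(n-1)` in the recurrence gives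
`k_{n+1} = A_n k_n`, `s_{n+1} = A_n s_n + B_n k_n` and `t_{n+1} = A_n t_n + B_n s_n - C_n k_{n-1}`,
and eliminating `s` and `t` leaves the stated formulas.
-/

theorem polyFwdDiff_eq_taylor (q : ℝ[X]) : polyFwdDiff q = taylor 1 q - q := by
  simp [polyFwdDiff, taylor_apply]

theorem polyFwdDiff_polyBwdDiff_eq_taylor (q : ℝ[X]) :
    polyFwdDiff (polyBwdDiff q) = taylor 1 q + taylor (-1) q - 2 * q := by
  have hshift : (X - 1 : ℝ[X]).comp (X + 1) = X := by simp
  simp only [polyFwdDiff, polyBwdDiff, taylor_apply, sub_comp, comp_assoc, hshift, comp_X, map_one,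
    map_neg, ← sub_eq_add_neg]
  ring

theorem coeff_taylor_of_natDegree_le {K : Type*} [Field K] [CharZero K] {q : K[X]} {j : ℕ}
    (hq : q.natDegree ≤ j + 4) (r : K) :
    (taylor r q).coeff j = q.coeff j + (j + 1) * q.coeff (j + 1) * r
      + (j + 2) * (j + 1) / 2 * q.coeff (j + 2) * r ^ 2
      + (j + 3) * (j + 2) * (j + 1) / 6 * q.coeff (j + 3) * r ^ 3
      + (j + 4) * (j + 3) * (j + 2) * (j + 1) / 24 * q.coeff (j + 4) * r ^ 4 := by
  have hdeg : (hasseDeriv j q).natDegree < 5 :=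
    (natDegree_hasseDeriv_le q j).trans_lt (by omega)
  simp only [taylor_coeff, eval_eq_sum_range' hdeg, hasseDeriv_coeff, Finset.sum_range_succ,
    Finset.sum_range_zero]
  simp only [add_comm _ j, add_zero, Nat.cast_add_choose, Nat.factorial_succ, Nat.factorial_zero,
    Nat.choose_self]
  have hfact : (j.factorial : K) ≠ 0 := Nat.cast_ne_zero.mpr j.factorial_ne_zero
  push_cast
  field_simp
  ring

section TopCoefficients

variable {q : ℝ[X]} {j : ℕ}

theorem coeff_polyFwdDiff (hq : q.natDegree ≤ j + 4) :
    (polyFwdDiff q).coeff j =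
      (j + 1) * q.coeff (j + 1) + (j + 2) * (j + 1) / 2 * q.coeff (j + 2)
        + (j + 3) * (j + 2) * (j + 1) / 6 * q.coeff (j + 3)
        + (j + 4) * (j + 3) * (j + 2) * (j + 1) / 24 * q.coeff (j + 4) := by
  rw [polyFwdDiff_eq_taylor, coeff_sub, coeff_taylor_of_natDegree_le hq]
  ring

theorem coeff_polyFwdDiff_polyBwdDiff (hq : q.natDegree ≤ j + 4) :
    (polyFwdDiff (polyBwdDiff q)).coeff j =
      (j + 2) * (j + 1) * q.coeff (j + 2)
        + (j + 4) * (j + 3) * (j + 2) * (j + 1) / 12 * q.coeff (j + 4) := by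
  rw [polyFwdDiff_polyBwdDiff_eq_taylor, coeff_sub, coeff_add, coeff_taylor_of_natDegree_le hq,
    coeff_taylor_of_natDegree_le hq, ← C_ofNat, coeff_C_mul]
  ring

end TopCoefficients

noncomputable def hypergeometricOp (σ τ : ℝ[X]) (l : ℝ) (q : ℝ[X]) : ℝ[X] :=
  σ * polyFwdDiff (polyBwdDiff q) + τ * polyFwdDiff q + C l * q

/-- The eigenvalue `λ_n` for which the equation has a solution of degree `n`. -/
def hypergeometricEigenvalue (a d : ℝ) (n : ℕ) : ℝ := -(a * n * ((n : ℝ) - 1) + d * n)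

section HypergeometricEquation

variable (a b c d e : ℝ) {q : ℝ[X]} {j : ℕ}

theorem coeff_hypergeometricOp (l : ℝ) (hq : q.natDegree ≤ j + 2) :
    (hypergeometricOp (C a * X ^ 2 + C b * X + C c) (C d * X + C e) l q).coeff j =
      (a * j * (j - 1) + d * j + l) * q.coeff j
        + (j + 1) * (b * j + d * j / 2 + e) * q.coeff (j + 1)
        + (j + 2) * (j + 1) * (a * j * (j - 1) / 12 + c + d * j / 6 + e / 2) * q.coeff (j + 2) := by
  have hvan : ∀ i, j + 2 < i → q.coeff i = 0 := fun i hi =>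
    coeff_eq_zero_of_natDegree_lt (hq.trans_lt hi)
  simp only [hypergeometricOp, add_mul, coeff_add, mul_assoc, coeff_C_mul]
  rcases j with _ | _ | i
  · rw [coeff_X_pow_mul', if_neg (by norm_num), coeff_X_mul_zero, coeff_X_mul_zero,
      coeff_polyFwdDiff_polyBwdDiff (by omega), coeff_polyFwdDiff (by omega)]
    simp (disch := omega) only [hvan]
    push_cast
    ring
  · rw [coeff_X_pow_mul', if_neg (by norm_num), coeff_X_mul, coeff_X_mul,
      coeff_polyFwdDiff_polyBwdDiff (j := 0) (by omega),
      coeff_polyFwdDiff_polyBwdDiff (j := 1) (by omega),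
      coeff_polyFwdDiff (j := 0) (by omega), coeff_polyFwdDiff (j := 1) (by omega)]
    simp (disch := omega) only [hvan]
    push_cast
    ring
  · rw [coeff_X_pow_mul, coeff_X_mul, coeff_X_mul,
      coeff_polyFwdDiff_polyBwdDiff (j := i) (by omega),
      coeff_polyFwdDiff_polyBwdDiff (j := i + 1) (by omega),
      coeff_polyFwdDiff_polyBwdDiff (j := i + 2) (by omega),
      coeff_polyFwdDiff (j := i + 1) (by omega), coeff_polyFwdDiff (j := i + 2) (by omega)]
    simp (disch := omega) only [hvan]
    simp only [add_assoc, Nat.reduceAdd]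
    push_cast
    ring

variable {a b c d e}

theorem hypergeometricOp_coeff_subleading (hq : q.natDegree ≤ j + 1)
    (h : hypergeometricOp (C a * X ^ 2 + C b * X + C c) (C d * X + C e)
      (hypergeometricEigenvalue a d (j + 1)) q = 0) :
    (2 * a * j + d) * q.coeff j = (j + 1) * (b * j + d * j / 2 + e) * q.coeff (j + 1) := by
  have hj := congrArg (coeff · j) h
  simp only [coeff_hypergeometricOp a b c d e _ (hq.trans (Nat.le_succ _)), coeff_zero,
    coeff_eq_zero_of_natDegree_lt (hq.trans_lt (Nat.lt_succ_self _)),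
    hypergeometricEigenvalue] at hj
  push_cast at hj
  linear_combination -hj

/-- `(X * q).coeff j` is the coefficient of `X ^ (j - 1)` in `q`, and `0` for `j = 0`. -/
theorem hypergeometricOp_coeff_X_mul (hq : q.natDegree ≤ j + 1)
    (h : hypergeometricOp (C a * X ^ 2 + C b * X + C c) (C d * X + C e)
      (hypergeometricEigenvalue a d (j + 1)) q = 0) :
    2 * (a * (2 * j - 1) + d) * (X * q).coeff j =
      j * (b * (j - 1) + d * (j - 1) / 2 + e) * q.coeff j
        + (j + 1) * j * (a * (j - 1) * (j - 2) / 12 + c + d * (j - 1) / 6 + e / 2)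
          * q.coeff (j + 1) := by
  rcases j with _ | i
  · simp
  · have hi := congrArg (coeff · i) h
    simp only [coeff_hypergeometricOp a b c d e _ hq, coeff_zero, hypergeometricEigenvalue] at hi
    rw [coeff_X_mul]
    push_cast at hi ⊢
    linear_combination -hi

end HypergeometricEquation

theorem coeff_linear_mul_sub {R : Type*} [Ring R] (α β γ : R) (f g : R[X]) (i : ℕ) :
    ((C α * X + C β) * f - C γ * g).coeff i =
      α * (X * f).coeff i + β * f.coeff i - γ * g.coeff i := by
  simp only [add_mul, mul_assoc, coeff_sub, coeff_add, coeff_C_mul]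

section Elimination

variable {K : Type*} [Field K] [CharZero K] (a b c d e n : K)
  {k₀ k₁ k₂ s₁ s₂ t₁ t₂ α β γ : K}

theorem threeTermRecurrence_B_eq
    (hs₁ : (2 * a * (n - 1) + d) * s₁ = n * (b * (n - 1) + d * (n - 1) / 2 + e) * k₁)
    (hs₂ : (2 * a * n + d) * s₂ = (n + 1) * (b * n + d * n / 2 + e) * k₂)
    (hk : k₂ = α * k₁) (hs : s₂ = α * s₁ + β * k₁) :
    β * k₁ * (2 * a * n + d) * (2 * a * (n - 1) + d) =
      k₂ * ((n - 1) * (d + 2 * b) * (a * (n - 1) + a + d) - 2 * a * e + d ^ 2 + d * e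
        + 2 * b * d) := by
  linear_combination (-(2 * a * n + d) * (2 * a * (n - 1) + d)) * hs
    + (2 * a * (n - 1) + d) * hs₂ - α * (2 * a * n + d) * hs₁
    + (2 * a * n + d) * n * (b * (n - 1) + d * (n - 1) / 2 + e) * hk

theorem threeTermRecurrence_C_eq (hD : 2 * a * n + d ≠ 0)
    (hs₁ : (2 * a * (n - 1) + d) * s₁ = n * (b * (n - 1) + d * (n - 1) / 2 + e) * k₁)
    (hs₂ : (2 * a * n + d) * s₂ = (n + 1) * (b * n + d * n / 2 + e) * k₂)
    (ht₁ : 2 * (a * (2 * n - 3) + d) * t₁ = (n - 1) * (b * (n - 2) + d * (n - 2) / 2 + e) * s₁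
      + n * (n - 1) * (a * (n - 2) * (n - 3) / 12 + c + d * (n - 2) / 6 + e / 2) * k₁)
    (ht₂ : 2 * (a * (2 * n - 1) + d) * t₂ = n * (b * (n - 1) + d * (n - 1) / 2 + e) * s₂
      + (n + 1) * n * (a * (n - 1) * (n - 2) / 12 + c + d * (n - 1) / 6 + e / 2) * k₂)
    (hk : k₂ = α * k₁)
    (hβ : β * k₁ * (2 * a * n + d) * (2 * a * (n - 1) + d) =
      k₂ * ((n - 1) * (d + 2 * b) * (a * (n - 1) + a + d) - 2 * a * e + d ^ 2 + d * e
        + 2 * b * d))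
    (ht : t₂ = α * t₁ + β * s₁ - γ * k₀) :
    γ * k₀ * (a * (2 * n - 3) + d) * (a * (2 * n - 1) + d) * (2 * a * (n - 1) + d) ^ 2 =
      -k₂ * n * (a * (n - 2) + d) *
        ((n - 1) * (a * (n - 1) + d) *
            (a ^ 2 * (n - 1) ^ 2 + a * (n - 1) * d + 4 * a * c + 2 * a * e - b * d - b ^ 2) +
          a * e ^ 2 - b * d * e + c * d ^ 2) := by
  have h₁ : α * t₁ * (a * (2 * n - 3) + d) * (2 * a * (n - 1) + d) =
      k₂ * n * (n - 1) *
        ((b * (n - 2) + d * (n - 2) / 2 + e) * (b * (n - 1) + d * (n - 1) / 2 + e)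
          + (a * (n - 2) * (n - 3) / 12 + c + d * (n - 2) / 6 + e / 2) * (2 * a * (n - 1) + d))
        / 2 := by
    linear_combination (α * (2 * a * (n - 1) + d) / 2) * ht₁
      + (α * (n - 1) * (b * (n - 2) + d * (n - 2) / 2 + e) / 2) * hs₁
      - (n * (n - 1) *
          ((b * (n - 2) + d * (n - 2) / 2 + e) * (b * (n - 1) + d * (n - 1) / 2 + e)
            + (a * (n - 2) * (n - 3) / 12 + c + d * (n - 2) / 6 + e / 2) * (2 * a * (n - 1) + d))
          / 2) * hk
  have h₂ : β * s₁ * (2 * a * (n - 1) + d) ^ 2 * (2 * a * n + d) =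
      n * (b * (n - 1) + d * (n - 1) / 2 + e) * k₂ *
        ((n - 1) * (d + 2 * b) * (a * (n - 1) + a + d) - 2 * a * e + d ^ 2 + d * e
          + 2 * b * d) := by
    linear_combination (β * (2 * a * (n - 1) + d) * (2 * a * n + d)) * hs₁
      + (n * (b * (n - 1) + d * (n - 1) / 2 + e)) * hβ
  have h₃ : t₂ * (a * (2 * n - 1) + d) * (2 * a * n + d) =
      k₂ * n * (n + 1) * ((b * (n - 1) + d * (n - 1) / 2 + e) * (b * n + d * n / 2 + e)
        + (a * (n - 1) * (n - 2) / 12 + c + d * (n - 1) / 6 + e / 2) * (2 * a * n + d)) / 2 := by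
    linear_combination ((2 * a * n + d) / 2) * ht₂
      + (n * (b * (n - 1) + d * (n - 1) / 2 + e) / 2) * hs₂
  -- After multiplication by `2an + d`, each term of `ht` is a multiple of `k₂` by `h₁`, `h₂`, `h₃`.
  refine mul_left_cancel₀ hD ?_
  linear_combination
    ((2 * a * n + d) * (a * (2 * n - 3) + d) * (a * (2 * n - 1) + d) * (2 * a * (n - 1) + d) ^ 2)
      * ht
    + ((a * (2 * n - 1) + d) * (2 * a * (n - 1) + d) * (2 * a * n + d)) * h₁
    + ((a * (2 * n - 3) + d) * (a * (2 * n - 1) + d)) * h₂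
    - ((a * (2 * n - 3) + d) * (2 * a * (n - 1) + d) ^ 2) * h₃

end Elimination

theorem discrete_recurrence_coefficients_general
    (a b c d e : ℝ)
    (had : ∀ m : ℤ, -3 ≤ m → a * m + d ≠ 0)
    (p : ℕ → Polynomial ℝ) (k : ℕ → ℝ)
    (hdeg : ∀ n : ℕ, (p n).degree = n)
    (hlead : ∀ n : ℕ, (p n).coeff n = k n)
    (hde : ∀ n : ℕ,
      (Polynomial.C a * X ^ 2 + Polynomial.C b * X + Polynomial.C c) *
          polyFwdDiff (polyBwdDiff (p n)) +
        (Polynomial.C d * X + Polynomial.C e) * polyFwdDiff (p n) +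
        Polynomial.C (-(a * n * ((n : ℝ) - 1) + d * n)) * p n = 0)
    (A B C : ℕ → ℝ)
    (hrec : ∀ n : ℕ, 1 ≤ n →
      p (n + 1) = (Polynomial.C (A n) * X + Polynomial.C (B n)) * p n -
        Polynomial.C (C n) * p (n - 1)) :
    ∀ n : ℕ, 1 ≤ n →
      A n * k n = k (n + 1) ∧
      B n * k n * (2 * a * n + d) * (2 * a * ((n : ℝ) - 1) + d) =
        k (n + 1) * (((n : ℝ) - 1) * (d + 2 * b) * (a * ((n : ℝ) - 1) + a + d) -
          2 * a * e + d ^ 2 + d * e + 2 * b * d) ∧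
      C n * k (n - 1) * (a * (2 * (n : ℝ) - 3) + d) * (a * (2 * (n : ℝ) - 1) + d) *
          (2 * a * ((n : ℝ) - 1) + d) ^ 2 =
        -(k (n + 1)) * (n : ℝ) * (a * ((n : ℝ) - 2) + d) *
          (((n : ℝ) - 1) * (a * ((n : ℝ) - 1) + d) *
              (a ^ 2 * ((n : ℝ) - 1) ^ 2 + a * ((n : ℝ) - 1) * d + 4 * a * c + 2 * a * e -
                b * d - b ^ 2) +
            a * e ^ 2 - b * d * e + c * d ^ 2) := by
  intro n hn
  obtain ⟨m, rfl⟩ : ∃ m, n = m + 1 := ⟨n - 1, by omega⟩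
  have hnat (i : ℕ) : (p i).natDegree ≤ i := natDegree_le_of_degree_le (hdeg i).le
  have hvan {i j : ℕ} (h : i < j) : (p i).coeff j = 0 :=
    coeff_eq_zero_of_natDegree_lt ((hnat i).trans_lt h)
  have hcoeff (i : ℕ) := congrArg (coeff · i) (hrec (m + 1) le_add_self)
  simp only [coeff_linear_mul_sub, Nat.add_sub_cancel] at hcoeff
  have hk : k (m + 2) = A (m + 1) * k (m + 1) := by
    simpa [coeff_X_mul, hlead, hvan] using hcoeff (m + 2)
  have hs : (p (m + 2)).coeff (m + 1) =
      A (m + 1) * (p (m + 1)).coeff m + B (m + 1) * k (m + 1) := by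
    simpa [coeff_X_mul, hlead, hvan] using hcoeff (m + 1)
  have ht : (X * p (m + 2)).coeff (m + 1) = A (m + 1) * (X * p (m + 1)).coeff m
      + B (m + 1) * (p (m + 1)).coeff m - C (m + 1) * k m := by
    simpa [coeff_X_mul, hlead] using hcoeff m
  have hs₁ := hypergeometricOp_coeff_subleading (hnat (m + 1)) (hde (m + 1))
  have hs₂ := hypergeometricOp_coeff_subleading (hnat (m + 2)) (hde (m + 2))
  have ht₁ := hypergeometricOp_coeff_X_mul (hnat (m + 1)) (hde (m + 1))
  have ht₂ := hypergeometricOp_coeff_X_mul (hnat (m + 2)) (hde (m + 2))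
  simp only [hlead] at hs₁ hs₂ ht₁ ht₂
  push_cast at hs₂ ht₂
  have hD : 2 * a * ((m + 1 : ℕ) : ℝ) + d ≠ 0 := fun h =>
    had (2 * (m + 1)) (by omega) (by push_cast at h ⊢; linear_combination h)
  have hβ := threeTermRecurrence_B_eq a b d e (m + 1 : ℕ)
    (by push_cast; linear_combination hs₁) (by push_cast; linear_combination hs₂) hk hs
  exact ⟨hk.symm, hβ, threeTermRecurrence_C_eq a b c d e (m + 1 : ℕ) hD
    (s₂ := (p (m + 2)).coeff (m + 1))
    (by push_cast; linear_combination hs₁) (by push_cast; linear_combination hs₂)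
    (by push_cast; linear_combination ht₁) (by push_cast; linear_combination ht₂)
    hk hβ ht⟩

theorem discrete_recurrence_coefficients
    (a b c d e : ℝ)
    (had : ∀ m : ℤ, -3 ≤ m → a * m + d ≠ 0)
    (p : ℕ → Polynomial ℝ) (k : ℕ → ℝ)
    (hdeg : ∀ n : ℕ, (p n).degree = n)
    (hlead : ∀ n : ℕ, (p n).coeff n = k n)
    (hk0 : ∀ n : ℕ, k n ≠ 0)
    (hde : ∀ n : ℕ,
      (Polynomial.C a * X ^ 2 + Polynomial.C b * X + Polynomial.C c) *
          polyFwdDiff (polyBwdDiff (p n)) +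
        (Polynomial.C d * X + Polynomial.C e) * polyFwdDiff (p n) +
        Polynomial.C (-(a * n * ((n : ℝ) - 1) + d * n)) * p n = 0)
    (A B C : ℕ → ℝ)
    (hrec : ∀ n : ℕ, 1 ≤ n →
      p (n + 1) = (Polynomial.C (A n) * X + Polynomial.C (B n)) * p n -
        Polynomial.C (C n) * p (n - 1)) :
    ∀ n : ℕ, 1 ≤ n →
      A n * k n = k (n + 1) ∧
      B n * k n * (2 * a * n + d) * (2 * a * ((n : ℝ) - 1) + d) =
        k (n + 1) * (((n : ℝ) - 1) * (d + 2 * b) * (a * ((n : ℝ) - 1) + a + d) -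
          2 * a * e + d ^ 2 + d * e + 2 * b * d) ∧
      C n * k (n - 1) * (a * (2 * (n : ℝ) - 3) + d) * (a * (2 * (n : ℝ) - 1) + d) *
          (2 * a * ((n : ℝ) - 1) + d) ^ 2 =
        -(k (n + 1)) * (n : ℝ) * (a * ((n : ℝ) - 2) + d) *
          (((n : ℝ) - 1) * (a * ((n : ℝ) - 1) + d) *
              (a ^ 2 * ((n : ℝ) - 1) ^ 2 + a * ((n : ℝ) - 1) * d + 4 * a * c + 2 * a * e -
                b * d - b ^ 2) +
            a * e ^ 2 - b * d * e + c * d ^ 2) :=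
  discrete_recurrence_coefficients_general a b c d e had p k hdeg hlead hde A B C hrec
end

section
/- For every n ≥ 1 the subleading coefficients satisfy k'_{n+1}·n·(d+2an)·(2b(n−1) + dn + 2e − d)·k_n = (n+1)·(dn + 2bn + 2e)·(2a(n−1)+d)·k_{n+1}·k'_n, where k'_n denotes the coefficient of X^{n−1} in p_n. (Corollary 6) -/
open Polynomial Finset

section helpers
lemma coeff_comp_master (f : Polynomial ℝ) (r : ℝ) (j t : ℕ) (h : f.natDegree ≤ j + t) :
    (f.comp (X + C r)).coeff j =
      ∑ i ∈ Finset.range (t + 1), ((i + j).choose j : ℝ) * f.coeff (i + j) * r ^ i := by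
  rw [← taylor_apply, taylor_coeff, Polynomial.eval_eq_sum_range' (n := t + 1)
    (by have := Polynomial.natDegree_hasseDeriv_le f j; omega) r]
  exact Finset.sum_congr rfl fun i _ => by rw [Polynomial.hasseDeriv_coeff]

lemma hce2 (s : ℕ) : (s + 2).choose s = (s + 2).choose 2 := by
  rw [show s = (s + 2) - 2 from by omega]; exact Nat.choose_symm (by omega)

lemma hce3 (s : ℕ) : (s + 3).choose s = (s + 3).choose 3 := by
  rw [show s = (s + 3) - 3 from by omega]; exact Nat.choose_symm (by omega)

lemma compD1 (f : Polynomial ℝ) (r : ℝ) (s : ℕ) (h : f.natDegree ≤ s + 1) :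
    (f.comp (X + C r)).coeff s = f.coeff s + ((s : ℝ) + 1) * f.coeff (s + 1) * r := by
  rw [coeff_comp_master f r s 1 (by omega)]
  simp only [Finset.sum_range_succ, Finset.sum_range_one,
    show 0 + s = s from by omega, show 1 + s = s + 1 from by omega,
    Nat.choose_self, Nat.choose_succ_self_right]
  push_cast; ring

lemma compD2 (f : Polynomial ℝ) (r : ℝ) (s : ℕ) (h : f.natDegree ≤ s + 2) :
    (f.comp (X + C r)).coeff s = f.coeff s + ((s : ℝ) + 1) * f.coeff (s + 1) * r
      + ((s + 2).choose 2 : ℝ) * f.coeff (s + 2) * r ^ 2 := by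
  rw [coeff_comp_master f r s 2 (by omega)]
  simp only [Finset.sum_range_succ, Finset.sum_range_one,
    show 0 + s = s from by omega, show 1 + s = s + 1 from by omega,
    show 2 + s = s + 2 from by omega,
    Nat.choose_self, Nat.choose_succ_self_right, hce2]
  push_cast; ring

lemma compD3 (f : Polynomial ℝ) (r : ℝ) (s : ℕ) (h : f.natDegree ≤ s + 3) :
    (f.comp (X + C r)).coeff s = f.coeff s + ((s : ℝ) + 1) * f.coeff (s + 1) * r
      + ((s + 2).choose 2 : ℝ) * f.coeff (s + 2) * r ^ 2
      + ((s + 3).choose 3 : ℝ) * f.coeff (s + 3) * r ^ 3 := by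
  rw [coeff_comp_master f r s 3 (by omega)]
  simp only [Finset.sum_range_succ, Finset.sum_range_one,
    show 0 + s = s from by omega, show 1 + s = s + 1 from by omega,
    show 2 + s = s + 2 from by omega, show 3 + s = s + 3 from by omega,
    Nat.choose_self, Nat.choose_succ_self_right, hce2, hce3]
  push_cast; ring

lemma cast_choose2 (s : ℕ) : ((s + 2).choose 2 : ℝ) * 2 = ((s : ℝ) + 2) * ((s : ℝ) + 1) := by
  induction s with
  | zero => norm_num
  | succ t ih =>
    have h : (t + 1 + 2).choose 2 = (t + 2).choose 1 + (t + 2).choose 2 := by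
      rw [show t + 1 + 2 = (t + 2) + 1 from by omega]
      exact Nat.choose_succ_succ (t + 2) 1
    rw [h]; push_cast [Nat.choose_one_right] at *; linarith
end helpers


lemma key_s13 (a b c d e : ℝ) (q : Polynomial ℝ) (n : ℕ) (hn : 1 ≤ n) (hdeg : q.natDegree = n)
    (hde : (C a * X ^ 2 + C b * X + C c) * polyFwdDiff (polyBwdDiff q) +
        (C d * X + C e) * polyFwdDiff q +
        C (-(a * n * ((n : ℝ) - 1) + d * n)) * q = 0) :
    q.coeff (n - 1) * 2 * (2 * a * ((n : ℝ) - 1) + d) =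
      (n : ℝ) * (2 * b * ((n : ℝ) - 1) + d * ((n : ℝ) - 1) + 2 * e) * q.coeff n := by
  have r1 : (X + 1 : Polynomial ℝ) = X + C 1 := by simp
  have r2 : (X - 1 : Polynomial ℝ) = X + C (-1) := by
    rw [map_neg, map_one]; ring
  have hinner : ((X + C (-1) : Polynomial ℝ)).comp (X + C 1) = X := by
    simp [add_comp]
  have e1 : polyFwdDiff (polyBwdDiff q) =
      q.comp (X + C 1) - C 2 * q + q.comp (X + C (-1)) := by
    unfold polyFwdDiff polyBwdDiff
    rw [sub_comp, r1, r2, Polynomial.comp_assoc, hinner, comp_X]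
    rw [show (C 2 : Polynomial ℝ) = 2 from map_ofNat C 2]
    ring
  have e2 : polyFwdDiff q = q.comp (X + C 1) - q := by
    unfold polyFwdDiff; rw [r1]
  rw [e1, e2] at hde
  have hde2 : C a * (X ^ 2 * (q.comp (X + C 1) - C 2 * q + q.comp (X + C (-1))))
      + C b * (X * (q.comp (X + C 1) - C 2 * q + q.comp (X + C (-1))))
      + C c * (q.comp (X + C 1) - C 2 * q + q.comp (X + C (-1)))
      + C d * (X * (q.comp (X + C 1) - q))
      + C e * (q.comp (X + C 1) - q)
      + C (-(a * n * ((n : ℝ) - 1) + d * n)) * q = 0 := by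
    linear_combination hde
  clear hde e1 e2
  obtain ⟨m, rfl⟩ : ∃ m, n = m + 1 := ⟨n - 1, by omega⟩
  simp only [Nat.add_sub_cancel]
  match m with
  | 0 =>
    have lx0 : ∀ f : Polynomial ℝ, (X * f).coeff 0 = 0 := fun f => by
      rw [← pow_one (X : Polynomial ℝ), coeff_X_pow_mul']; simp
    have lx20 : ∀ f : Polynomial ℝ, (X ^ 2 * f).coeff 0 = 0 := fun f => by
      rw [coeff_X_pow_mul']; simp
    have Hc := congrArg (fun f : Polynomial ℝ => f.coeff 0) hde2
    simp only [coeff_add, coeff_C_mul, coeff_zero, lx0, lx20, coeff_sub,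
      compD1 q 1 0 (by omega), compD1 q (-1) 0 (by omega)] at Hc
    push_cast at Hc ⊢
    linear_combination (-2 : ℝ) * Hc
  | 1 =>
    have lx1 : ∀ f : Polynomial ℝ, (X * f).coeff 1 = f.coeff 0 := fun f => by
      simpa using Polynomial.coeff_X_mul f 0
    have lx21 : ∀ f : Polynomial ℝ, (X ^ 2 * f).coeff 1 = 0 := fun f => by
      rw [coeff_X_pow_mul']; simp
    have Hc := congrArg (fun f : Polynomial ℝ => f.coeff 1) hde2
    simp only [coeff_add, coeff_C_mul, coeff_zero, lx1, lx21, coeff_sub,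
      compD1 q 1 1 (by omega), compD1 q (-1) 1 (by omega),
      compD2 q 1 0 (by omega), compD2 q (-1) 0 (by omega)] at Hc
    push_cast at Hc ⊢
    have c2 := cast_choose2 0
    push_cast at c2
    linear_combination (-2 : ℝ) * Hc + (2 * b + d) * q.coeff 2 * c2
  | (t + 2) =>
    have hndeg : q.natDegree = t + 3 := by omega
    have lx : ∀ f : Polynomial ℝ, (X * f).coeff (t + 2) = f.coeff (t + 1) := fun f => by
      have := Polynomial.coeff_X_mul f (t + 1)
      simpa [show t + 1 + 1 = t + 2 from by omega] using this
    have lx2 : ∀ f : Polynomial ℝ, (X ^ 2 * f).coeff (t + 2) = f.coeff t := fun f =>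
      Polynomial.coeff_X_pow_mul f 2 t
    have Hc := congrArg (fun f : Polynomial ℝ => f.coeff (t + 2)) hde2
    simp only [coeff_add, coeff_C_mul, coeff_zero, lx, lx2, coeff_sub,
      compD3 q 1 t (by omega), compD3 q (-1) t (by omega),
      compD2 q 1 (t + 1) (by omega), compD2 q (-1) (t + 1) (by omega),
      compD1 q 1 (t + 2) (by omega), compD1 q (-1) (t + 2) (by omega)] at Hc
    push_cast at Hc ⊢
    have c2a := cast_choose2 t
    have c2b := cast_choose2 (t + 1)
    push_cast at c2a c2b
    linear_combination (-2 : ℝ) * Hc + 2 * a * q.coeff (t + 2) * c2a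
      + (2 * b + d) * q.coeff (t + 3) * c2b


theorem discrete_subleading_coefficient_ratio
    (a b c d e : ℝ)
    (had : ∀ m : ℤ, -3 ≤ m → a * m + d ≠ 0)
    (p : ℕ → Polynomial ℝ) (k : ℕ → ℝ)
    (hdeg : ∀ n : ℕ, (p n).degree = n)
    (hlead : ∀ n : ℕ, (p n).coeff n = k n)
    (hk0 : ∀ n : ℕ, k n ≠ 0)
    (hde : ∀ n : ℕ,
      (Polynomial.C a * X ^ 2 + Polynomial.C b * X + Polynomial.C c) *
          polyFwdDiff (polyBwdDiff (p n)) +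
        (Polynomial.C d * X + Polynomial.C e) * polyFwdDiff (p n) +
        Polynomial.C (-(a * n * ((n : ℝ) - 1) + d * n)) * p n = 0) :
    ∀ n : ℕ, 1 ≤ n →
      (p (n + 1)).coeff n * (n : ℝ) * (d + 2 * a * n) *
          (2 * b * ((n : ℝ) - 1) + d * n + 2 * e - d) * k n =
        ((n : ℝ) + 1) * (d * n + 2 * b * n + 2 * e) * (2 * a * ((n : ℝ) - 1) + d) *
          k (n + 1) * (p n).coeff (n - 1) := by
  intro n hn
  have hnd : ∀ m : ℕ, (p m).natDegree = m := fun m =>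
    Polynomial.natDegree_eq_of_degree_eq_some (hdeg m)
  have L0 := key_s13 a b c d e (p n) n hn (hnd n) (hde n)
  have L1 := key_s13 a b c d e (p (n + 1)) (n + 1) (by omega) (hnd (n + 1)) (hde (n + 1))
  rw [hlead n] at L0
  rw [Nat.add_sub_cancel, hlead (n + 1)] at L1
  push_cast at L1
  set N : ℝ := (n : ℝ)
  linear_combination (N * (2 * b * (N - 1) + d * (N - 1) + 2 * e) * k n / 2) * L1
    - ((N + 1) * (2 * b * N + d * N + 2 * e) * k (n + 1) / 2) * L0
end

section
/- For every n ∈ ℕ the polynomial K_n satisfies the difference equation Δ(∇K_n) + (α·X + β)·ΔK_n − α·n·K_n = 0, and for every n ≥ 1 the difference rule ∇K_n = α·n·K_{n−1} holds. (Section 6, equations (69) with σ=1, τ=αX+β, and (81)) -/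
open Polynomial

lemma charlier_aux (α β : ℝ) (K : ℕ → Polynomial ℝ)
    (hK0 : K 0 = 1)
    (hK1 : K 1 = C α * X + C β)
    (hKrec : ∀ n : ℕ,
      K (n + 2) = (C α * X + C (((n : ℝ) + 1) * α + β)) * K (n + 1) +
        C (((n : ℝ) + 1) * α) * K n) :
    ∀ n : ℕ,
      (K (n + 1) - (K (n + 1)).comp (X - 1) = C α * (C (n : ℝ) + 1) * K n) ∧
      (K (n + 2) - (K (n + 2)).comp (X - 1) = C α * (C (n : ℝ) + 2) * K (n + 1)) ∧
      ((C α * X + C β + 1) * (K n).comp (X + 1) = K (n + 1) + K n) := by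
  intro n
  induction n with
  | zero =>
    refine ⟨?_, ?_, ?_⟩
    · rw [hK1, hK0]
      simp only [add_comp, mul_comp, sub_comp, C_comp, X_comp, one_comp,
        Nat.cast_zero, C_0]
      ring
    · rw [hKrec 0, hK1, hK0]
      simp only [add_comp, mul_comp, sub_comp, C_comp, X_comp, one_comp,
        Nat.cast_zero, C_0]
      simp only [C_add, C_mul, C_1, C_0, map_ofNat]
      ring
    · rw [hK1, hK0]
      simp only [one_comp, Nat.cast_zero, C_0]
      ring
  | succ n ih =>
    obtain ⟨ihB1, ihB2, ihS⟩ := ih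
    have hc1 : (K (n + 1)).comp (X - 1) = K (n + 1) - C α * (C (n : ℝ) + 1) * K n := by
      linear_combination -ihB1
    have hc2 : (K (n + 2)).comp (X - 1) = K (n + 2) - C α * (C (n : ℝ) + 2) * K (n + 1) := by
      linear_combination -ihB2
    refine ⟨?_, ?_, ?_⟩
    · push_cast
      simp only [C_add, C_1]
      linear_combination ihB2
    · show K (n + 1 + 2) - (K (n + 1 + 2)).comp (X - 1) = _
      rw [hKrec (n + 1)]
      simp only [add_comp, mul_comp, sub_comp, C_comp, X_comp, one_comp]
      rw [hc2, hc1, hKrec n]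
      push_cast
      simp only [C_add, C_mul, C_1, C_0, map_ofNat]
      ring
    · have hb := congrArg (fun p => p.comp (X + 1)) ihB1
      simp only [sub_comp, mul_comp, add_comp, C_comp, X_comp, one_comp,
        comp_assoc, add_sub_cancel_right, comp_X] at hb
      have hc : (K (n + 1)).comp (X + 1)
          = K (n + 1) + C α * (C (n : ℝ) + 1) * (K n).comp (X + 1) := by
        linear_combination hb
      show _ = K (n + 1 + 1) + K (n + 1)
      rw [hc, hKrec n]
      simp only [C_add, C_mul, C_1, map_ofNat] at ihS ⊢
      linear_combination (C α * (C (n : ℝ) + 1)) * ihS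

theorem new_polynomial_system
    (α β : ℝ) (hα : α ≠ 0)
    (K : ℕ → Polynomial ℝ)
    (hK0 : K 0 = 1)
    (hK1 : K 1 = Polynomial.C α * X + Polynomial.C β)
    (hKrec : ∀ n : ℕ,
      K (n + 2) = (Polynomial.C α * X + Polynomial.C (((n : ℝ) + 1) * α + β)) * K (n + 1) +
        Polynomial.C (((n : ℝ) + 1) * α) * K n) :
    (∀ n : ℕ,
      polyFwdDiff (polyBwdDiff (K n)) +
        (Polynomial.C α * X + Polynomial.C β) * polyFwdDiff (K n) -
        Polynomial.C (α * n) * K n = 0) ∧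
    (∀ n : ℕ, 1 ≤ n → polyBwdDiff (K n) = Polynomial.C (α * n) * K (n - 1)) := by
  have H := charlier_aux α β K hK0 hK1 hKrec
  constructor
  · intro n
    match n with
    | 0 =>
      simp [polyFwdDiff, polyBwdDiff, hK0]
    | (m + 1) =>
      obtain ⟨hB, -, hS⟩ := H m
      have hb := congrArg (fun p => p.comp (X + 1)) hB
      simp only [sub_comp, mul_comp, add_comp, C_comp, X_comp, one_comp,
        comp_assoc, add_sub_cancel_right, comp_X] at hb
      simp only [polyFwdDiff, polyBwdDiff]
      rw [hB]
      simp only [mul_comp, add_comp, C_comp, X_comp, one_comp]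
      push_cast
      simp only [C_add, C_mul, C_1] at hb hS ⊢
      linear_combination (C α * (C (m : ℝ) + 1)) * hS
        + (C α * X + C β) * hb
  · intro n hn
    match n, hn with
    | (m + 1), _ =>
      obtain ⟨hB, -, -⟩ := H m
      simp only [polyBwdDiff, Nat.add_sub_cancel]
      rw [hB]
      push_cast
      simp only [C_add, C_mul, C_1]
end

section
/- The coefficients a_k of p satisfy, for every k with 0 ≤ k ≤ n−1: (n−k)·(a(n+k−1)+d)·a_k = (k+1)·((kb+e)·a_{k+1} + (k+2)·c·a_{k+2}), where a_{n+1} := 0. (Section 7, continuous coefficient recurrence) -/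
open Polynomial

theorem continuous_coefficient_recurrence
    (a b c d e : ℝ) (n : ℕ)
    (p : Polynomial ℝ)
    (hdeg : p.degree = n)
    (hde :
      (Polynomial.C a * X ^ 2 + Polynomial.C b * X + Polynomial.C c) *
          derivative (derivative p) +
        (Polynomial.C d * X + Polynomial.C e) * derivative p -
        Polynomial.C (a * n * ((n : ℝ) - 1) + d * n) * p = 0) :
    ∀ k : ℕ, k < n →
      ((n : ℝ) - k) * (a * ((n : ℝ) + k - 1) + d) * p.coeff k =
        ((k : ℝ) + 1) * (((k : ℝ) * b + e) * p.coeff (k + 1) +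
          ((k : ℝ) + 2) * c * p.coeff (k + 2)) := by
  intro k hk
  have hde2 : (Polynomial.C a * derivative (derivative p)) * X ^ 2 +
      ((Polynomial.C b * derivative (derivative p)) * X ^ 1 +
        ((Polynomial.C d * derivative p) * X ^ 1 +
          (Polynomial.C c * derivative (derivative p) +
            (Polynomial.C e * derivative p -
              Polynomial.C (a * n * ((n : ℝ) - 1) + d * n) * p)))) = 0 := by
    linear_combination hde
  have h := congrArg (fun q => q.coeff k) hde2
  simp only [coeff_add, coeff_sub, coeff_mul_X_pow', coeff_C_mul, coeff_derivative,
    coeff_zero] at h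
  rcases k with _ | _ | m
  · norm_num at h ⊢
    linear_combination -h
  · norm_num at h ⊢
    push_cast at h ⊢
    linear_combination -h
  · have h2 : 2 ≤ m + 2 := by omega
    have h1 : 1 ≤ m + 2 := by omega
    simp only [if_pos h2, if_pos h1] at h
    norm_num at h
    push_cast at h ⊢
    linear_combination -h
end

section
/- The coefficients a_k of p satisfy: (i) (2a(n−1)+d)·a_{n−1} = n·(e + (b + d/2)·(n−1))·a_n; and (ii) for every k with 0 ≤ k ≤ n−2: (n−k)·(a(n+k−1)+d)·a_k = ((k+1)/2)·((2b+d)·k + 2e)·a_{k+1} + Σ_{j=2}^{n−k} ( a·(1+(−1)^j)·C(k+j, j+2) + (b·(1−(−1)^j) + d)·C(k+j, j+1) + (c·(1+(−1)^j) + e)·C(k+j, j) )·a_{k+j}, where C(m, i) denotes the binomial coefficient. (Section 7, formulas (84) and (85)) -/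
open Polynomial

lemma auxCompCoeff (p : Polynomial ℝ) (r : ℝ) (m : ℕ) :
    (p.comp (X + C r)).coeff m =
      ∑ i ∈ Finset.range (p.natDegree + 1), ((i + m).choose m : ℝ) * r ^ i * p.coeff (i + m) := by
  rw [← taylor_apply, taylor_coeff,
    eval_eq_sum_range' (lt_of_le_of_lt (natDegree_hasseDeriv_le p m)
      (lt_of_le_of_lt (Nat.sub_le _ _) (Nat.lt_succ_self _)))]
  refine Finset.sum_congr rfl fun i _ => ?_
  rw [hasseDeriv_coeff]
  ring

lemma auxShift (n m : ℕ) (f : ℕ → ℝ) (h0 : ∀ j, j < m → f j = 0) (h1 : ∀ j, n < j → f j = 0) :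
    ∑ i ∈ Finset.range (n + 1), f (i + m) = ∑ j ∈ Finset.range (n + 1), f j := by
  have A : ∑ i ∈ Finset.range (n + 1), f (i + m) = ∑ j ∈ Finset.Ico m (n + 1 + m), f j := by
    rw [Finset.sum_Ico_eq_sum_range]
    simp only [Nat.add_sub_cancel]
    exact Finset.sum_congr rfl fun i _ => by rw [Nat.add_comm]
  have B : ∑ j ∈ Finset.Ico 0 m, f j + ∑ j ∈ Finset.Ico m (n + 1 + m), f j
      = ∑ j ∈ Finset.Ico 0 (n + 1 + m), f j :=
    Finset.sum_Ico_consecutive _ (Nat.zero_le _) (by omega)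
  have C0 : ∑ j ∈ Finset.Ico 0 m, f j = 0 :=
    Finset.sum_eq_zero fun j hj => h0 j (by simpa using hj)
  have D : ∑ j ∈ Finset.Ico 0 (n + 1 + m), f j = ∑ j ∈ Finset.range (n + 1), f j := by
    rw [← Finset.range_eq_Ico]
    exact (Finset.sum_subset (Finset.range_subset_range.2 (by omega))
      (fun j _ hj => h1 j (by simp at hj ⊢; omega))).symm
  rw [A, ← D, ← B, C0, zero_add]

lemma auxNegOnePow (m : ℕ) : ((-1 : ℝ)) ^ m * (-1 : ℝ) ^ m = 1 := by
  rw [← pow_add]; exact Even.neg_one_pow ⟨m, rfl⟩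

/-- Absolute-index coefficient function used in the case `k = k' + 2`. -/
noncomputable def auxK2 (a b c d e : ℝ) (k' : ℕ) (j : ℕ) : ℝ :=
  a * (j.choose k' : ℝ) * (1 + (-1 : ℝ) ^ j * (-1 : ℝ) ^ k')
    + b * (j.choose (k' + 1) : ℝ) * (1 - (-1 : ℝ) ^ j * (-1 : ℝ) ^ k')
    + c * (j.choose (k' + 2) : ℝ) * (1 + (-1 : ℝ) ^ j * (-1 : ℝ) ^ k')
    + d * (j.choose (k' + 1) : ℝ) + e * (j.choose (k' + 2) : ℝ)

/-- Absolute-index coefficient function used in the case `k = 1`. -/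
noncomputable def auxK1 (b c d e : ℝ) (j : ℕ) : ℝ :=
  b * (j.choose 0 : ℝ) * (1 + (-1 : ℝ) ^ j)
    + c * (j.choose 1 : ℝ) * (1 - (-1 : ℝ) ^ j)
    + d * (j.choose 0 : ℝ) + e * (j.choose 1 : ℝ)

/-- Absolute-index coefficient function used in the case `k = 0`. -/
noncomputable def auxK0 (c e : ℝ) (j : ℕ) : ℝ :=
  c * (j.choose 0 : ℝ) * (1 + (-1 : ℝ) ^ j) + e * (j.choose 0 : ℝ)

theorem discrete_coefficient_recurrence
    (a b c d e : ℝ) (n : ℕ) (hn : 1 ≤ n)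
    (p : Polynomial ℝ)
    (hdeg : p.degree = n)
    (hde :
      (Polynomial.C a * X ^ 2 + Polynomial.C b * X + Polynomial.C c) *
          polyFwdDiff (polyBwdDiff p) +
        (Polynomial.C d * X + Polynomial.C e) * polyFwdDiff p -
        Polynomial.C (a * n * ((n : ℝ) - 1) + d * n) * p = 0) :
    ((2 * a * ((n : ℝ) - 1) + d) * p.coeff (n - 1) =
      (n : ℝ) * (e + (b + d / 2) * ((n : ℝ) - 1)) * p.coeff n) ∧
    (∀ k : ℕ, k + 2 ≤ n →
      ((n : ℝ) - k) * (a * ((n : ℝ) + k - 1) + d) * p.coeff k =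
        (((k : ℝ) + 1) / 2) * ((2 * b + d) * k + 2 * e) * p.coeff (k + 1) +
          ∑ j ∈ Finset.Icc 2 (n - k),
            (a * (1 + (-1 : ℝ) ^ j) * (Nat.choose (k + j) (j + 2) : ℝ) +
              (b * (1 - (-1 : ℝ) ^ j) + d) * (Nat.choose (k + j) (j + 1) : ℝ) +
              (c * (1 + (-1 : ℝ) ^ j) + e) * (Nat.choose (k + j) j : ℝ)) *
            p.coeff (k + j)) := by
  have hN : p.natDegree = n := natDegree_eq_of_degree_eq_some hdeg
  -- coefficient formula for the forward difference
  have hD1 : ∀ m : ℕ, (polyFwdDiff p).coeff m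
      = (∑ j ∈ Finset.range (n + 1), (j.choose m : ℝ) * p.coeff j) - p.coeff m := by
    intro m
    have h1 : (polyFwdDiff p).coeff m = (p.comp (X + C 1)).coeff m - p.coeff m := by
      unfold polyFwdDiff; rw [coeff_sub, C_1]
    rw [h1, auxCompCoeff p 1 m, hN]
    have hsh := auxShift n m (fun j => (j.choose m : ℝ) * p.coeff j)
      (fun j hj => by simp [Nat.choose_eq_zero_of_lt hj])
      (fun j hj => by simp [coeff_eq_zero_of_natDegree_lt (hN ▸ hj)])
    beta_reduce at hsh
    rw [← hsh]
    congr 1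
    exact Finset.sum_congr rfl fun i _ => by rw [one_pow, mul_one]
  -- coefficient formula for `Δ∇p`
  have hD2 : ∀ m : ℕ, (polyFwdDiff (polyBwdDiff p)).coeff m
      = (∑ j ∈ Finset.range (n + 1),
          (j.choose m : ℝ) * (1 + (-1 : ℝ) ^ j * (-1 : ℝ) ^ m) * p.coeff j) - 2 * p.coeff m := by
    intro m
    have hdec : polyFwdDiff (polyBwdDiff p)
        = p.comp (X + C 1) - C 2 * p + p.comp (X + C (-1)) := by
      simp only [polyFwdDiff, polyBwdDiff, sub_comp, comp_assoc]
      have g1 : (X.comp (X + 1) - comp 1 (X + 1) : Polynomial ℝ) = X := by simp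
      rw [g1, comp_X]
      have g2 : (X + C (1 : ℝ) : Polynomial ℝ) = X + 1 := by rw [C_1]
      have g3 : (X + C (-1 : ℝ) : Polynomial ℝ) = X - 1 := by rw [map_neg, C_1]; ring
      have g4 : (C (2:ℝ) : Polynomial ℝ) = 2 := map_ofNat C 2
      rw [g2, g3, g4]; ring
    rw [hdec, coeff_add, coeff_sub, auxCompCoeff p 1 m, auxCompCoeff p (-1) m, coeff_C_mul, hN]
    have hsh := auxShift n m
      (fun j => (j.choose m : ℝ) * (1 + (-1 : ℝ) ^ j * (-1 : ℝ) ^ m) * p.coeff j)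
      (fun j hj => by simp [Nat.choose_eq_zero_of_lt hj])
      (fun j hj => by simp [coeff_eq_zero_of_natDegree_lt (hN ▸ hj)])
    beta_reduce at hsh
    have hcomb : (∑ i ∈ Finset.range (n + 1), ((i + m).choose m : ℝ) * (1:ℝ) ^ i * p.coeff (i + m))
        + ∑ i ∈ Finset.range (n + 1), ((i + m).choose m : ℝ) * (-1:ℝ) ^ i * p.coeff (i + m)
        = ∑ i ∈ Finset.range (n + 1),
            ((i + m).choose m : ℝ) * (1 + (-1 : ℝ) ^ (i + m) * (-1 : ℝ) ^ m) * p.coeff (i + m) := by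
      rw [← Finset.sum_add_distrib]
      refine Finset.sum_congr rfl fun i _ => ?_
      rw [one_pow, pow_add]
      linear_combination (-(((i + m).choose m : ℝ) * (-1:ℝ) ^ i * p.coeff (i + m))) * auxNegOnePow m
    linear_combination hcomb + hsh
  -- extraction of the coefficient equation at index `k`
  have hEk : ∀ k : ℕ,
      (if 2 ≤ k then a * (polyFwdDiff (polyBwdDiff p)).coeff (k - 2) else 0) +
      (if 1 ≤ k then b * (polyFwdDiff (polyBwdDiff p)).coeff (k - 1) else 0) +
      c * (polyFwdDiff (polyBwdDiff p)).coeff k +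
      (if 1 ≤ k then d * (polyFwdDiff p).coeff (k - 1) else 0) +
      e * (polyFwdDiff p).coeff k - (a * n * ((n : ℝ) - 1) + d * n) * p.coeff k = 0 := by
    intro k
    have hde' : C a * polyFwdDiff (polyBwdDiff p) * X ^ 2
        + C b * polyFwdDiff (polyBwdDiff p) * X ^ 1
        + C c * polyFwdDiff (polyBwdDiff p) + C d * polyFwdDiff p * X ^ 1 + C e * polyFwdDiff p
        - C (a * n * ((n : ℝ) - 1) + d * n) * p = 0 := by linear_combination hde
    have h := congrArg (fun q : Polynomial ℝ => q.coeff k) hde'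
    simp only [coeff_add, coeff_sub, coeff_mul_X_pow', coeff_C_mul, coeff_zero] at h
    simpa using h
  -- splitting a sum over `range (n+1)` at index `k`
  have split : ∀ k : ℕ, k ≤ n → ∀ f : ℕ → ℝ,
      (Finset.range (n + 1)).sum f
        = (Finset.range (k + 1)).sum f + (Finset.Ico (k + 1) (n + 1)).sum f := by
    intro k hk f
    exact (Finset.sum_range_add_sum_Ico f (show k + 1 ≤ n + 1 by omega)).symm
  -- reindexing the upper part of the sum
  have key : ∀ (k : ℕ), k ≤ n → ∀ K : ℕ → ℝ,
      (∀ t : ℕ, 1 ≤ t →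
        K (k + t) = a * (1 + (-1 : ℝ) ^ t) * (Nat.choose (k + t) (t + 2) : ℝ)
          + (b * (1 - (-1 : ℝ) ^ t) + d) * (Nat.choose (k + t) (t + 1) : ℝ)
          + (c * (1 + (-1 : ℝ) ^ t) + e) * (Nat.choose (k + t) t : ℝ)) →
      ∑ j ∈ Finset.Ico (k + 1) (n + 1), K j * p.coeff j
        = ∑ j ∈ Finset.Icc 1 (n - k),
            (a * (1 + (-1 : ℝ) ^ j) * (Nat.choose (k + j) (j + 2) : ℝ)
              + (b * (1 - (-1 : ℝ) ^ j) + d) * (Nat.choose (k + j) (j + 1) : ℝ)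
              + (c * (1 + (-1 : ℝ) ^ j) + e) * (Nat.choose (k + j) j : ℝ)) * p.coeff (k + j) := by
    intro k hk K hK
    rw [Finset.sum_Ico_eq_sum_range]
    rw [show Finset.Icc 1 (n - k) = Finset.Ico 1 (n - k + 1) from (Finset.Ico_add_one_right_eq_Icc 1 _).symm]
    rw [Finset.sum_Ico_eq_sum_range]
    rw [show n + 1 - (k + 1) = n - k from by omega, show n - k + 1 - 1 = n - k from by omega]
    refine Finset.sum_congr rfl fun i _ => ?_
    rw [show k + 1 + i = k + (1 + i) from by omega, hK (1 + i) (by omega)]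
  -- the master identity
  have master : ∀ k : ℕ, k ≤ n →
      ((n : ℝ) - k) * (a * ((n : ℝ) + k - 1) + d) * p.coeff k
        = ∑ j ∈ Finset.Icc 1 (n - k),
            (a * (1 + (-1 : ℝ) ^ j) * (Nat.choose (k + j) (j + 2) : ℝ)
              + (b * (1 - (-1 : ℝ) ^ j) + d) * (Nat.choose (k + j) (j + 1) : ℝ)
              + (c * (1 + (-1 : ℝ) ^ j) + e) * (Nat.choose (k + j) j : ℝ)) * p.coeff (k + j) := by
    intro k hk
    match k with
    | 0 =>
      rw [← key 0 hk (auxK0 c e) (fun t ht => by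
        simp only [auxK0, Nat.zero_add, Nat.choose_zero_right, Nat.cast_one, mul_one,
          Nat.choose_self, Nat.choose_eq_zero_of_lt (show t < t + 2 by omega),
          Nat.choose_eq_zero_of_lt (show t < t + 1 by omega), Nat.cast_zero]
        ring)]
      have hE := hEk 0
      rw [if_neg (by omega), if_neg (by omega), if_neg (by omega), hD2 0, hD1 0] at hE
      have hsplit := split 0 hk (fun j => auxK0 c e j * p.coeff j)
      have hlow : ∑ j ∈ Finset.range (0 + 1), auxK0 c e j * p.coeff j
          = (2 * c + e) * p.coeff 0 := by
        rw [Finset.sum_range_one]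
        simp only [auxK0, Nat.choose_zero_right, Nat.cast_one, pow_zero, mul_one]
        ring
      have hT : ∑ j ∈ Finset.range (n + 1), auxK0 c e j * p.coeff j
          = c * (∑ j ∈ Finset.range (n + 1),
              (j.choose 0 : ℝ) * (1 + (-1 : ℝ) ^ j * (-1 : ℝ) ^ (0:ℕ)) * p.coeff j)
            + e * (∑ j ∈ Finset.range (n + 1), (j.choose 0 : ℝ) * p.coeff j) := by
        simp only [Finset.mul_sum, ← Finset.sum_add_distrib]
        refine Finset.sum_congr rfl fun j _ => ?_
        simp only [auxK0]; ring
      push_cast at hE hsplit hlow hT ⊢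
      linear_combination -hE - hT + hsplit + hlow
    | 1 =>
      rw [← key 1 hk (auxK1 b c d e) (fun t ht => by
        have c1 : (1 + t).choose (t + 2) = 0 := Nat.choose_eq_zero_of_lt (by omega)
        have c2 : (1 + t).choose (t + 1) = 1 := by
          rw [show 1 + t = t + 1 from by omega, Nat.choose_self]
        have c3 : (1 + t).choose t = t + 1 := by
          rw [show 1 + t = t + 1 from by omega, Nat.choose_succ_self_right]
        have c4 : (1 + t).choose 1 = 1 + t := Nat.choose_one_right _
        have hp : ((-1 : ℝ)) ^ (1 + t) = -(-1 : ℝ) ^ t := by rw [pow_add]; ring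
        simp only [auxK1, c1, c2, c3, c4, Nat.choose_zero_right, hp,
          Nat.cast_zero, Nat.cast_one, Nat.cast_add]
        ring)]
      have hE := hEk 1
      rw [if_neg (by omega), if_pos (by omega), if_pos (by omega)] at hE
      rw [show (1:ℕ) - 1 = 0 from rfl] at hE
      rw [hD2 0, hD2 1, hD1 0, hD1 1] at hE
      have hsplit := split 1 hk (fun j => auxK1 b c d e j * p.coeff j)
      have hlow : ∑ j ∈ Finset.range (1 + 1), auxK1 b c d e j * p.coeff j
          = (2 * b + d) * p.coeff 0 + (2 * c + d + e) * p.coeff 1 := by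
        rw [Finset.sum_range_succ, Finset.sum_range_one]
        norm_num [auxK1]; ring
      have hT : ∑ j ∈ Finset.range (n + 1), auxK1 b c d e j * p.coeff j
          = b * (∑ j ∈ Finset.range (n + 1),
              (j.choose 0 : ℝ) * (1 + (-1 : ℝ) ^ j * (-1 : ℝ) ^ (0:ℕ)) * p.coeff j)
            + c * (∑ j ∈ Finset.range (n + 1),
              (j.choose 1 : ℝ) * (1 + (-1 : ℝ) ^ j * (-1 : ℝ) ^ (1:ℕ)) * p.coeff j)
            + d * (∑ j ∈ Finset.range (n + 1), (j.choose 0 : ℝ) * p.coeff j)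
            + e * (∑ j ∈ Finset.range (n + 1), (j.choose 1 : ℝ) * p.coeff j) := by
        simp only [Finset.mul_sum, ← Finset.sum_add_distrib]
        refine Finset.sum_congr rfl fun j _ => ?_
        simp only [auxK1]; ring
      push_cast at hE hsplit hlow hT ⊢
      linear_combination -hE - hT + hsplit + hlow
    | (k' + 2) =>
      rw [← key (k' + 2) hk (auxK2 a b c d e k') (fun t ht => by
        have c1 : (k' + 2 + t).choose k' = (k' + 2 + t).choose (t + 2) := by
          have h := Nat.choose_symm (show t + 2 ≤ k' + 2 + t by omega)
          rw [show k' + 2 + t - (t + 2) = k' from by omega] at h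
          rw [← h]
        have c2 : (k' + 2 + t).choose (k' + 1) = (k' + 2 + t).choose (t + 1) := by
          have h := Nat.choose_symm (show t + 1 ≤ k' + 2 + t by omega)
          rw [show k' + 2 + t - (t + 1) = k' + 1 from by omega] at h
          rw [← h]
        have c3 : (k' + 2 + t).choose (k' + 2) = (k' + 2 + t).choose t := by
          have h := Nat.choose_symm (show t ≤ k' + 2 + t by omega)
          rw [show k' + 2 + t - t = k' + 2 from by omega] at h
          rw [← h]
        simp only [auxK2, c1, c2, c3]
        rcases Nat.even_or_odd k' with hpar | hpar
        · have h1 : ((-1 : ℝ)) ^ k' = 1 := Even.neg_one_pow hpar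
          have h2 : ((-1 : ℝ)) ^ (k' + 2 + t) = (-1 : ℝ) ^ t := by
            rw [pow_add, pow_add, h1]; ring
          rw [h1, h2]; ring
        · have h1 : ((-1 : ℝ)) ^ k' = -1 := Odd.neg_one_pow hpar
          have h2 : ((-1 : ℝ)) ^ (k' + 2 + t) = -(-1 : ℝ) ^ t := by
            rw [pow_add, pow_add, h1]; ring
          rw [h1, h2]; ring)]
      have hE := hEk (k' + 2)
      rw [if_pos (by omega), if_pos (by omega), if_pos (by omega)] at hE
      rw [show k' + 2 - 2 = k' from by omega, show k' + 2 - 1 = k' + 1 from by omega] at hE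
      rw [hD2 k', hD2 (k' + 1), hD2 (k' + 2), hD1 (k' + 1), hD1 (k' + 2)] at hE
      have hsplit := split (k' + 2) hk (fun j => auxK2 a b c d e k' j * p.coeff j)
      have hchoose : ((k' + 2).choose k' : ℝ) = ((k':ℝ) + 2) * ((k':ℝ) + 1) / 2 := by
        have h := Nat.choose_symm (show 2 ≤ k' + 2 by omega)
        rw [show k' + 2 - 2 = k' from by omega] at h
        rw [h, Nat.cast_choose_two]
        push_cast; ring
      have hlow : ∑ j ∈ Finset.range (k' + 2 + 1), auxK2 a b c d e k' j * p.coeff j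
          = 2 * a * p.coeff k' + (2 * b + d) * p.coeff (k' + 1)
            + (a * ((k':ℝ) + 2) * ((k':ℝ) + 1) + 2 * c + d * ((k':ℝ) + 2) + e)
              * p.coeff (k' + 2) := by
        rw [show k' + 2 + 1 = (k' + 1) + 1 + 1 from by omega]
        rw [Finset.sum_range_succ, Finset.sum_range_succ]
        have hz : ∑ j ∈ Finset.range (k' + 1), auxK2 a b c d e k' j * p.coeff j
            = 1 * (auxK2 a b c d e k' k' * p.coeff k') := by
          rw [one_mul, Finset.sum_range_succ]
          rw [Finset.sum_eq_zero fun j hj => by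
            have hj' : j < k' := Finset.mem_range.1 hj
            simp [auxK2, Nat.choose_eq_zero_of_lt hj',
              Nat.choose_eq_zero_of_lt (show j < k' + 1 by omega),
              Nat.choose_eq_zero_of_lt (show j < k' + 2 by omega)]]
          rw [zero_add]
        rw [hz, one_mul]
        have v1 : auxK2 a b c d e k' k' = 2 * a := by
          simp only [auxK2, Nat.choose_self, Nat.cast_one,
            Nat.choose_eq_zero_of_lt (show k' < k' + 1 by omega),
            Nat.choose_eq_zero_of_lt (show k' < k' + 2 by omega), Nat.cast_zero]
          linear_combination a * auxNegOnePow k'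
        have v2 : auxK2 a b c d e k' (k' + 1) = 2 * b + d := by
          simp only [auxK2, Nat.choose_succ_self_right, Nat.choose_self, Nat.cast_one,
            Nat.choose_eq_zero_of_lt (show k' + 1 < k' + 2 by omega), Nat.cast_zero]
          have hp : ((-1 : ℝ)) ^ (k' + 1) = -(-1 : ℝ) ^ k' := by rw [pow_add]; ring
          rw [hp]
          push_cast
          linear_combination (-a * ((k':ℝ) + 1) + b) * auxNegOnePow k'
        have v3 : auxK2 a b c d e k' (k' + 2)
            = a * ((k':ℝ) + 2) * ((k':ℝ) + 1) + 2 * c + d * ((k':ℝ) + 2) + e := by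
          simp only [auxK2, Nat.choose_self, Nat.cast_one, hchoose,
            Nat.choose_succ_self_right]
          have hp : ((-1 : ℝ)) ^ (k' + 2) = (-1 : ℝ) ^ k' := by rw [pow_add]; ring
          rw [hp]
          push_cast
          linear_combination (a * ((k':ℝ) + 2) * ((k':ℝ) + 1) / 2 - b * ((k':ℝ) + 2) + c) * auxNegOnePow k'
        rw [v1, v2, v3]
      have hT : ∑ j ∈ Finset.range (n + 1), auxK2 a b c d e k' j * p.coeff j
          = a * (∑ j ∈ Finset.range (n + 1),
              (j.choose k' : ℝ) * (1 + (-1 : ℝ) ^ j * (-1 : ℝ) ^ k') * p.coeff j)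
            + b * (∑ j ∈ Finset.range (n + 1),
              (j.choose (k' + 1) : ℝ) * (1 + (-1 : ℝ) ^ j * (-1 : ℝ) ^ (k' + 1)) * p.coeff j)
            + c * (∑ j ∈ Finset.range (n + 1),
              (j.choose (k' + 2) : ℝ) * (1 + (-1 : ℝ) ^ j * (-1 : ℝ) ^ (k' + 2)) * p.coeff j)
            + d * (∑ j ∈ Finset.range (n + 1), (j.choose (k' + 1) : ℝ) * p.coeff j)
            + e * (∑ j ∈ Finset.range (n + 1), (j.choose (k' + 2) : ℝ) * p.coeff j) := by
        simp only [Finset.mul_sum, ← Finset.sum_add_distrib]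
        refine Finset.sum_congr rfl fun j _ => ?_
        simp only [auxK2]
        ring
      push_cast at hE hsplit hlow hT ⊢
      linear_combination -hE - hT + hsplit + hlow
  constructor
  · -- part (i)
    have h := master (n - 1) (by omega)
    rw [show n - (n - 1) = 1 from by omega] at h
    rw [Finset.Icc_self, Finset.sum_singleton] at h
    rw [show n - 1 + 1 = n from by omega] at h
    rw [Nat.cast_sub hn] at h
    rw [Nat.cast_choose_two, Nat.choose_one_right] at h
    push_cast at h ⊢
    linear_combination h
  · -- part (ii)
    intro k hk2
    have h := master k (by omega)
    have hset : Finset.Icc 1 (n - k) = insert 1 (Finset.Icc 2 (n - k)) := by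
      ext x
      simp only [Finset.mem_Icc, Finset.mem_insert]
      omega
    rw [hset, Finset.sum_insert (by simp)] at h
    rw [h]
    congr 1
    rw [Nat.cast_choose_two, Nat.choose_one_right]
    push_cast
    ring
end
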